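/- arXiv:1502.02472 — 4 statements merged into one kernel-verified Lean document; each statement's English description precedes it below -/
import Mathlib

section
/- Let c and k be fixed positive integers. Then for all sufficiently large m, setting n = ⌊m^{c-1+1/k} / (4 k^{c+1})⌋, there exists a bipartite graph G = (L, R, E) with |L| = n and |R| = m such that: (a) every vertex of L has degree exactly c, and every vertex of R has degree in the closed interval [nc/m − √((n/2)·ln(4m)), nc/m + √((n/2)·ln(4m))]; (b) every subset S ⊆ L with 1 ≤ |S| ≤ k satisfies |Γ(S)| ≥ |S|. In particular, G is a c-uniform (n, cn, k, m)-combinatorial batch code with n = Ω(m^{c-1+1/k}). -/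
open Finset


-- count of c-subsets of Fin m containing a fixed v
lemma count_mem_powersetCard (m c : ℕ) (hc : 0 < c) (v : Fin m) :
    ((Finset.powersetCard c (Finset.univ : Finset (Fin m))).filter (fun A => v ∈ A)).card
      = (m - 1).choose (c - 1) := by
  rw [show (m-1).choose (c-1) = (Finset.powersetCard (c-1) ((Finset.univ : Finset (Fin m)).erase v)).card by
    rw [Finset.card_powersetCard, Finset.card_erase_of_mem (Finset.mem_univ v), Finset.card_univ,
      Fintype.card_fin]]
  apply Finset.card_bij (fun A _ => A.erase v)
  · intro A hA
    simp only [Finset.mem_filter, Finset.mem_powersetCard] at hA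
    rw [Finset.mem_powersetCard]
    exact ⟨Finset.erase_subset_erase v hA.1.1,
      by rw [Finset.card_erase_of_mem hA.2, hA.1.2]⟩
  · intro A hA A' hA' h
    simp only [Finset.mem_filter, Finset.mem_powersetCard] at hA hA'
    rw [← Finset.insert_erase hA.2, ← Finset.insert_erase hA'.2, h]
  · intro B hB
    rw [Finset.mem_powersetCard] at hB
    have hv : v ∉ B := fun hvB => (Finset.mem_erase.1 (hB.1 hvB)).1 rfl
    refine ⟨insert v B, ?_, ?_⟩
    · simp only [Finset.mem_filter, Finset.mem_powersetCard]
      refine ⟨⟨Finset.subset_univ _, ?_⟩, Finset.mem_insert_self _ _⟩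
      rw [Finset.card_insert_of_notMem hv, hB.2]
      omega
    · rw [Finset.erase_insert hv]


lemma sum_sq_sum_piFinset {α : Type*} [DecidableEq α] (n : ℕ) (D : Finset α) (f : α → ℝ)
    (hf : ∑ a ∈ D, f a = 0) :
    ∑ ω ∈ Fintype.piFinset (fun _ : Fin n => D), (∑ u, f (ω u)) ^ 2
      = (D.card : ℝ) ^ (n - 1) * n * ∑ a ∈ D, (f a) ^ 2 := by
  classical
  have key : ∀ u u' : Fin n,
      (∑ ω ∈ Fintype.piFinset (fun _ : Fin n => D), f (ω u) * f (ω u'))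
        = if u = u' then (D.card : ℝ) ^ (n - 1) * ∑ a ∈ D, (f a) ^ 2 else 0 := by
    intro u u'
    by_cases huu : u = u'
    · subst huu
      rw [if_pos rfl]
      have h1 : ∀ ω : Fin n → α, f (ω u) * f (ω u)
          = ∏ i, (if i = u then f (ω i) ^ 2 else 1) := by
        intro ω
        rw [Finset.prod_ite_eq' Finset.univ u (fun i => f (ω i) ^ 2)]
        simp [sq]
      simp_rw [h1]
      rw [← Finset.prod_univ_sum (fun _ : Fin n => D) (fun i a => if i = u then f a ^ 2 else 1)]
      have h2 : ∀ i : Fin n, (∑ a ∈ D, if i = u then f a ^ 2 else 1)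
          = if i = u then ∑ a ∈ D, f a ^ 2 else (D.card : ℝ) := by
        intro i; split_ifs <;> simp
      simp_rw [h2]
      rw [← Finset.mul_prod_erase Finset.univ _ (Finset.mem_univ u), if_pos rfl]
      rw [Finset.prod_congr rfl (fun i hi => if_neg (Finset.mem_erase.1 hi).1),
        Finset.prod_const, Finset.card_erase_of_mem (Finset.mem_univ u), Finset.card_univ,
        Fintype.card_fin]
      ring
    · simp only [if_neg huu]
      have h1 : ∀ ω : Fin n → α, f (ω u) * f (ω u')
          = ∏ i, (if i = u ∨ i = u' then f (ω i) else 1) := by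
        intro ω
        rw [← Finset.mul_prod_erase Finset.univ _ (Finset.mem_univ u),
          ← Finset.mul_prod_erase _ _ (Finset.mem_erase.2 ⟨Ne.symm huu, Finset.mem_univ u'⟩)]
        rw [if_pos (Or.inl rfl), if_pos (Or.inr rfl)]
        rw [Finset.prod_eq_one, mul_one]
        intro i hi
        simp only [Finset.mem_erase] at hi
        exact if_neg (by tauto)
      simp_rw [h1]
      rw [← Finset.prod_univ_sum (fun _ : Fin n => D) (fun i a => if i = u ∨ i = u' then f a else 1)]
      apply Finset.prod_eq_zero (Finset.mem_univ u)
      simp only [if_pos (Or.inl rfl : u = u ∨ u = u')]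
      exact hf
  have expand : ∀ ω : Fin n → α, (∑ u, f (ω u)) ^ 2 = ∑ u, ∑ u', f (ω u) * f (ω u') := by
    intro ω; rw [sq, Finset.sum_mul_sum]
  simp_rw [expand]
  rw [Finset.sum_comm]
  have : ∀ u : Fin n, (∑ ω ∈ Fintype.piFinset (fun _ : Fin n => D), ∑ u', f (ω u) * f (ω u'))
      = (D.card : ℝ) ^ (n - 1) * ∑ a ∈ D, (f a) ^ 2 := by
    intro u
    rw [Finset.sum_comm]
    simp_rw [key]
    simp
  simp_rw [this]
  rw [Finset.sum_const, Finset.card_univ, Fintype.card_fin, nsmul_eq_mul]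
  ring


lemma count_E (n m c : ℕ) (S : Finset (Fin n)) (T : Finset (Fin m)) :
    (((Fintype.piFinset fun _ : Fin n =>
        Finset.powersetCard c (Finset.univ : Finset (Fin m)))).filter
      (fun ω => ∀ u ∈ S, ω u ⊆ T)).card
    = (T.card.choose c) ^ S.card * (m.choose c) ^ (n - S.card) := by
  classical
  have heq : ((Fintype.piFinset fun _ : Fin n =>
        Finset.powersetCard c (Finset.univ : Finset (Fin m)))).filter
      (fun ω => ∀ u ∈ S, ω u ⊆ T)
      = Fintype.piFinset (fun u : Fin n =>
          if u ∈ S then Finset.powersetCard c T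
          else Finset.powersetCard c (Finset.univ : Finset (Fin m))) := by
    ext ω
    simp only [Finset.mem_filter, Fintype.mem_piFinset, Finset.mem_powersetCard]
    constructor
    · rintro ⟨h1, h2⟩ u
      split_ifs with hu
      · exact Finset.mem_powersetCard.2 ⟨h2 u hu, (h1 u).2⟩
      · exact Finset.mem_powersetCard.2 (h1 u)
    · intro h
      constructor
      · intro u
        have := h u
        split_ifs at this with hu
        · exact ⟨Finset.subset_univ _, (Finset.mem_powersetCard.1 this).2⟩
        · exact Finset.mem_powersetCard.1 this
      · intro u hu
        have := h u
        rw [if_pos hu] at this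
        exact (Finset.mem_powersetCard.1 this).1
  rw [heq, Fintype.card_piFinset]
  have : ∀ u : Fin n, (if u ∈ S then Finset.powersetCard c T
      else Finset.powersetCard c (Finset.univ : Finset (Fin m))).card
      = if u ∈ S then T.card.choose c else m.choose c := by
    intro u; split_ifs <;>
      simp [Finset.card_powersetCard]
  simp_rw [this]
  rw [Finset.prod_ite, Finset.prod_const, Finset.prod_const]
  congr 1
  · congr 1
    rw [Finset.filter_univ_mem]
  · congr 1
    rw [Finset.filter_not, Finset.filter_univ_mem, Finset.card_sdiff_of_subset (Finset.subset_univ _),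
      Finset.card_univ, Fintype.card_fin]

-- lower bound for descFactorial
lemma pow_le_descFactorial' (n k : ℕ) (h : k ≤ n) : (n - k + 1) ^ k ≤ n.descFactorial k := by
  rw [Nat.descFactorial_eq_prod_range]
  calc (n - k + 1) ^ k = ∏ _i ∈ Finset.range k, (n - k + 1) := by
        rw [Finset.prod_const, Finset.card_range]
    _ ≤ ∏ i ∈ Finset.range k, (n - i) := by
        apply Finset.prod_le_prod'
        intro i hi
        rw [Finset.mem_range] at hi
        omega

set_option maxHeartbeats 2000000 in
/-- **Existence of almost-regular uniform combinatorial batch codes (Theorem 2 of the paper).**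
For fixed positive integers `c, k` and all sufficiently large `m`, setting
`n = ⌊m^(c-1+1/k) / (4 k^(c+1))⌋`, there is a bipartite graph on `Fin n` (data items)
and `Fin m` (servers), given by neighborhoods `Γ : Fin n → Finset (Fin m)`, such that
(a) every left vertex has degree exactly `c` and every right vertex has degree in
`[nc/m − √((n/2)·ln(4m)), nc/m + √((n/2)·ln(4m))]`, and
(b) every `S ⊆ L` with `1 ≤ |S| ≤ k` satisfies `|Γ(S)| ≥ |S|`,
i.e., the graph is a `c`-uniform `(n, cn, k, m)`-CBC with `n = Ω(m^(c-1+1/k))`. -/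
theorem stmt_1 (c k : ℕ) (hc : 0 < c) (hk : 0 < k) :
    ∃ M : ℕ, ∀ m : ℕ, M ≤ m →
      ∀ n : ℕ, n = ⌊(m : ℝ) ^ ((c : ℝ) - 1 + 1 / (k : ℝ)) / (4 * (k : ℝ) ^ (c + 1))⌋₊ →
        ∃ Γ : Fin n → Finset (Fin m),
          (∀ u : Fin n, (Γ u).card = c) ∧
          (∀ v : Fin m,
            (n : ℝ) * c / m - Real.sqrt ((n : ℝ) / 2 * Real.log (4 * m)) ≤
              ((Finset.univ.filter fun u : Fin n => v ∈ Γ u).card : ℝ) ∧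
            ((Finset.univ.filter fun u : Fin n => v ∈ Γ u).card : ℝ) ≤
              (n : ℝ) * c / m + Real.sqrt ((n : ℝ) / 2 * Real.log (4 * m))) ∧
          (∀ S : Finset (Fin n), 1 ≤ S.card → S.card ≤ k →
            S.card ≤ (S.biUnion Γ).card) := by
  classical
  refine ⟨(2*k)^k + (8*k^(c+2))^k + 2*c^2 + c + k + (Nat.ceil (Real.exp (8*c))) + 1, ?_⟩
  intro m hm n hn
  -- basic numeric facts
  have hm0 : 0 < m := by omega
  have hmc : c ≤ m := by
    have h : c ≤ 2*c^2 + c := Nat.le_add_left _ _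
    omega
  have hmk : k ≤ m := by
    have : k ≤ (2*k)^k := by
      calc k ≤ 2*k := by omega
      _ ≤ (2*k)^k := Nat.le_self_pow (by omega) _
    omega
  have hm1R : (1:ℝ) ≤ m := by exact_mod_cast hm0
  have hm0R : (0:ℝ) < m := by exact_mod_cast hm0
  have hc0R : (0:ℝ) < c := by exact_mod_cast hc
  have hk0R : (0:ℝ) < k := by exact_mod_cast hk
  set α : ℝ := (c : ℝ) - 1 + 1 / (k : ℝ) with hα
  set β : ℝ := (m : ℝ) ^ ((1:ℝ) / (k : ℝ)) with hβ
  have hβpos : 0 < β := Real.rpow_pos_of_pos hm0R _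
  -- log bound
  have hL : (8:ℝ)*c ≤ Real.log (4*m) := by
    rw [Real.le_log_iff_exp_le (by positivity)]
    have h1 : Real.exp (8*c) ≤ (Nat.ceil (Real.exp (8*c)) : ℝ) := Nat.le_ceil _
    have h2 : (Nat.ceil (Real.exp (8*c)) : ℝ) ≤ m := by
      have : Nat.ceil (Real.exp (8*c)) ≤ m := by omega
      exact_mod_cast this
    push_cast at h1 h2 ⊢
    nlinarith
  have hLpos : 0 < Real.log (4*m) := lt_of_lt_of_le (by positivity) hL
  have hm2c2 : 2*(c:ℝ)^2 ≤ m := by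
    have : 2*c^2 ≤ m := by omega
    exact_mod_cast this
  -- β bounds
  have hkR0 : (k:ℝ) ≠ 0 := by positivity
  have hβge : ∀ x : ℝ, 0 ≤ x → x^k ≤ (m:ℝ) → x ≤ β := by
    intro x hx hxm
    have h2 : (x^k) ^ ((1:ℝ)/k) ≤ β := by
      rw [hβ]
      exact Real.rpow_le_rpow (by positivity) hxm (by positivity)
    calc x = (x^k)^((1:ℝ)/k) := by
          rw [← Real.rpow_natCast x k, ← Real.rpow_mul hx, mul_one_div, div_self hkR0,
            Real.rpow_one]
      _ ≤ β := h2
  have hβ2k : 2*(k:ℝ) ≤ β := by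
    apply hβge _ (by positivity)
    have h : ((2*k)^k : ℕ) ≤ m := by omega
    have h' : (((2*k)^k : ℕ) : ℝ) ≤ m := by exact_mod_cast h
    push_cast at h'
    exact h'
  have hβ8k : 8*(k:ℝ)^(c+2) ≤ β := by
    apply hβge _ (by positivity)
    have h : ((8*k^(c+2))^k : ℕ) ≤ m := by omega
    have h' : (((8*k^(c+2))^k : ℕ) : ℝ) ≤ m := by exact_mod_cast h
    push_cast at h'
    exact h'
  -- n bounds
  have hden : (0:ℝ) < 4 * (k:ℝ)^(c+1) := by positivity
  have hrpow_split : (m:ℝ) ^ α = (m:ℝ)^(c-1) * β := by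
    rw [hα, hβ]
    have hc1 : (c:ℝ) - 1 = ((c-1 : ℕ):ℝ) := by
      have : (1:ℕ) ≤ c := hc
      push_cast [Nat.cast_sub this]
      ring
    rw [hc1, Real.rpow_add hm0R, Real.rpow_natCast]
  have hpow1 : (1:ℝ) ≤ (m:ℝ)^(c-1) := one_le_pow₀ hm1R
  have hn2k : 2*k ≤ n := by
    rw [hn]
    apply Nat.le_floor
    rw [le_div_iff₀ hden]
    have h8 : ((2*k : ℕ):ℝ) * (4*(k:ℝ)^(c+1)) = 8*(k:ℝ)^(c+2) := by push_cast; ring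
    rw [h8, hrpow_split]
    calc 8*(k:ℝ)^(c+2) ≤ β := hβ8k
      _ = 1 * β := (one_mul β).symm
      _ ≤ (m:ℝ)^(c-1) * β := mul_le_mul_of_nonneg_right hpow1 hβpos.le
  have hn1 : 1 ≤ n := by omega
  have hkn : k ≤ n := by omega
  have hn0R : (0:ℝ) < n := by exact_mod_cast hn1
  have hnle : (n:ℝ) ≤ (m:ℝ) ^ α / (4 * (k:ℝ)^(c+1)) := by
    rw [hn]; exact Nat.floor_le (by positivity)
  -- the sample space
  set D : Finset (Finset (Fin m)) := Finset.powersetCard c (Finset.univ : Finset (Fin m)) with hD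
  set Ω : Finset (Fin n → Finset (Fin m)) := Fintype.piFinset (fun _ : Fin n => D) with hΩ
  have hDcard : D.card = m.choose c := by
    rw [hD, Finset.card_powersetCard, Finset.card_univ, Fintype.card_fin]
  have hΩcard : Ω.card = m.choose c ^ n := by
    rw [hΩ, Fintype.card_piFinset]
    simp [hDcard]
  have hDc1 : 1 ≤ m.choose c := Nat.choose_pos hmc
  have hDcR : (0:ℝ) < (m.choose c : ℝ) := by exact_mod_cast hDc1
  set w : ℝ := Real.sqrt ((n : ℝ) / 2 * Real.log (4 * m)) with hw
  have hw2 : w^2 = (n : ℝ) / 2 * Real.log (4 * m) := Real.sq_sqrt (by positivity)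
  have hw2pos : 0 < (n : ℝ) / 2 * Real.log (4 * m) := by positivity
  set p : ℝ := (c:ℝ)/m with hp
  have hp0 : 0 ≤ p := by positivity
  have hp1 : p ≤ 1 := by
    rw [hp, div_le_one hm0R]; exact_mod_cast hmc
  -- membership facts
  have hmemcard : ∀ ω ∈ Ω, ∀ u : Fin n, (ω u).card = c := by
    intro ω hω u
    have := Fintype.mem_piFinset.1 hω u
    rw [hD, Finset.mem_powersetCard] at this
    exact this.2
  -- degree function
  set deg : Fin m → (Fin n → Finset (Fin m)) → ℝ :=
    fun v ω => ((Finset.univ.filter fun u : Fin n => v ∈ ω u).card : ℝ) with hdeg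
  set degOK : (Fin n → Finset (Fin m)) → Prop := fun ω => ∀ v : Fin m,
      (n : ℝ) * c / m - w ≤ deg v ω ∧ deg v ω ≤ (n : ℝ) * c / m + w with hdegOK
  set hallOK : (Fin n → Finset (Fin m)) → Prop := fun ω =>
      ∀ S : Finset (Fin n), 1 ≤ S.card → S.card ≤ k →
        S.card ≤ (S.biUnion ω).card with hhallOK
  -- Chebyshev bound
  have hbadDeg : ((Ω.filter fun ω => ¬ degOK ω).card : ℝ) ≤ (m.choose c:ℝ)^n / 4 := by
    set L : ℝ := Real.log (4*m) with hLdef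
    have hid : m * ((m-1).choose (c-1)) = c * (m.choose c) := by
      have h := Nat.add_one_mul_choose_eq (m-1) (c-1)
      rw [Nat.sub_add_cancel hm0, Nat.sub_add_cancel hc] at h
      rw [h]; ring
    have hNv : ∀ v : Fin m, ((D.filter (fun A => v ∈ A)).card : ℝ) = (m.choose c : ℝ) * p := by
      intro v
      rw [hD, count_mem_powersetCard m c hc v, hp, ← mul_div_assoc, eq_div_iff hm0R.ne']
      have hid2 : ((m-1).choose (c-1)) * m = (m.choose c) * c :=
        (mul_comm _ _).trans (hid.trans (mul_comm _ _))
      exact_mod_cast hid2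
    have hcard_v : ∀ v : Fin m,
        ((Ω.filter fun ω => ¬((n : ℝ) * c / m - w ≤ deg v ω ∧
            deg v ω ≤ (n : ℝ) * c / m + w)).card : ℝ) * ((n:ℝ)/2 * L)
          ≤ (m.choose c:ℝ)^n * ((n:ℝ) * p) := by
      intro v
      set f : Finset (Fin m) → ℝ := fun A => (if v ∈ A then (1:ℝ) else 0) - p with hfdef
      have hf0 : ∑ A ∈ D, f A = 0 := by
        rw [hfdef]
        rw [Finset.sum_sub_distrib, Finset.sum_boole, Finset.sum_const, nsmul_eq_mul, hNv v,
          hDcard]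
        ring
      have hfsq : ∑ A ∈ D, (f A)^2 ≤ (m.choose c : ℝ) * p := by
        have hptw : ∀ A, (f A)^2 = (if v ∈ A then (1:ℝ) else 0) * (1 - 2*p) + p^2 := by
          intro A; by_cases hvA : v ∈ A <;> simp [hfdef, hvA] <;> ring
        rw [Finset.sum_congr rfl (fun A _ => hptw A), Finset.sum_add_distrib,
          ← Finset.sum_mul, Finset.sum_boole, Finset.sum_const, nsmul_eq_mul, hNv v, hDcard]
        nlinarith [hDcR, hp0]
      have key := sum_sq_sum_piFinset n D f hf0
      have hdegf : ∀ ω : Fin n → Finset (Fin m),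
          (∑ u, f (ω u)) = deg v ω - (n:ℝ)*c/m := by
        intro ω
        rw [hfdef]
        rw [Finset.sum_sub_distrib, Finset.sum_boole, Finset.sum_const, Finset.card_univ,
          Fintype.card_fin, nsmul_eq_mul, hdeg, hp]
        ring
      set B := Ω.filter fun ω => ¬((n : ℝ) * c / m - w ≤ deg v ω ∧
          deg v ω ≤ (n : ℝ) * c / m + w) with hB
      calc (B.card : ℝ) * ((n:ℝ)/2 * L) = ∑ _ω ∈ B, ((n:ℝ)/2 * L) := by
            rw [Finset.sum_const, nsmul_eq_mul]
        _ ≤ ∑ ω ∈ B, (∑ u, f (ω u))^2 := by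
            apply Finset.sum_le_sum
            intro ω hω
            rw [hB, Finset.mem_filter] at hω
            rw [hdegf ω, ← hw2]
            have hwnn : 0 ≤ w := Real.sqrt_nonneg _
            rcases not_and_or.1 hω.2 with h | h <;> push_neg at h <;> nlinarith
        _ ≤ ∑ ω ∈ Ω, (∑ u, f (ω u))^2 := by
            apply Finset.sum_le_sum_of_subset_of_nonneg (Finset.filter_subset _ _)
            intro ω _ _
            exact sq_nonneg _
        _ = (D.card : ℝ)^(n-1) * n * ∑ A ∈ D, (f A)^2 := key
        _ ≤ (m.choose c:ℝ)^(n-1) * n * ((m.choose c:ℝ) * p) := by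
            rw [hDcard]
            apply mul_le_mul_of_nonneg_left hfsq
            positivity
        _ = (m.choose c:ℝ)^(n-1) * (m.choose c:ℝ) * ((n:ℝ) * p) := by ring
        _ = (m.choose c:ℝ)^n * ((n:ℝ) * p) := by
            rw [← pow_succ]
            congr 2
            omega
    have hsubset : Ω.filter (fun ω => ¬ degOK ω) ⊆
        Finset.univ.biUnion (fun v : Fin m => Ω.filter fun ω =>
          ¬((n:ℝ)*c/m - w ≤ deg v ω ∧ deg v ω ≤ (n:ℝ)*c/m + w)) := by
      intro ω hω
      rw [Finset.mem_filter] at hω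
      simp only [hdegOK, not_forall] at hω
      obtain ⟨v, hv⟩ := hω.2
      rw [Finset.mem_biUnion]
      refine ⟨v, Finset.mem_univ v, ?_⟩
      rw [Finset.mem_filter]
      exact ⟨hω.1, hv⟩
    have hnat : (Ω.filter (fun ω => ¬ degOK ω)).card ≤
        ∑ v : Fin m, (Ω.filter fun ω =>
          ¬((n:ℝ)*c/m - w ≤ deg v ω ∧ deg v ω ≤ (n:ℝ)*c/m + w)).card :=
      le_trans (Finset.card_le_card hsubset) (Finset.card_biUnion_le)
    have hreal : ((Ω.filter (fun ω => ¬ degOK ω)).card : ℝ) ≤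
        ∑ v : Fin m, (((Ω.filter fun ω =>
          ¬((n:ℝ)*c/m - w ≤ deg v ω ∧ deg v ω ≤ (n:ℝ)*c/m + w)).card : ℕ) : ℝ) := by
      exact_mod_cast hnat
    have hwL : (0:ℝ) < (n:ℝ)/2 * L := hw2pos
    have hbound_v : ∀ v : Fin m, (((Ω.filter fun ω =>
          ¬((n:ℝ)*c/m - w ≤ deg v ω ∧ deg v ω ≤ (n:ℝ)*c/m + w)).card : ℕ) : ℝ)
        ≤ (m.choose c:ℝ)^n * ((n:ℝ) * p) / ((n:ℝ)/2 * L) := by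
      intro v
      rw [le_div_iff₀ hwL]
      exact hcard_v v
    calc ((Ω.filter (fun ω => ¬ degOK ω)).card : ℝ)
        ≤ ∑ _v : Fin m, (m.choose c:ℝ)^n * ((n:ℝ) * p) / ((n:ℝ)/2 * L) :=
          le_trans hreal (Finset.sum_le_sum (fun v _ => hbound_v v))
      _ = (m:ℝ) * ((m.choose c:ℝ)^n * ((n:ℝ) * p) / ((n:ℝ)/2 * L)) := by
          rw [Finset.sum_const, Finset.card_univ, Fintype.card_fin, nsmul_eq_mul]
      _ = (m.choose c:ℝ)^n * (2*(c:ℝ)/L) := by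
          rw [hp]
          field_simp
      _ ≤ (m.choose c:ℝ)^n * (1/4) := by
          apply mul_le_mul_of_nonneg_left _ (by positivity)
          have h1 : 2*(c:ℝ)/L ≤ 2*(c:ℝ)/(8*(c:ℝ)) :=
            div_le_div_of_nonneg_left (by positivity) (by positivity) hL
          have h2 : 2*(c:ℝ)/(8*(c:ℝ)) = 1/4 := by
            field_simp
            ring
          linarith
      _ = (m.choose c:ℝ)^n / 4 := by ring
  -- Hall bound
  have hbadHall : ((Ω.filter fun ω => ¬ hallOK ω).card : ℝ) ≤ (m.choose c:ℝ)^n / 4 := by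
    have hsubset : Ω.filter (fun ω => ¬ hallOK ω) ⊆
        (Finset.Icc (c+1) k).biUnion (fun s =>
          (Finset.powersetCard s (Finset.univ : Finset (Fin n))).biUnion (fun S =>
            (Finset.powersetCard (s-1) (Finset.univ : Finset (Fin m))).biUnion (fun T =>
              Ω.filter (fun ω => ∀ u ∈ S, ω u ⊆ T)))) := by
      intro ω hω
      rw [Finset.mem_filter] at hω
      simp only [hhallOK, not_forall] at hω
      obtain ⟨S, h1, h2, h3⟩ := hω.2
      push_neg at h3
      obtain ⟨u0, hu0⟩ := Finset.card_pos.1 h1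
      have hsubU : ω u0 ⊆ S.biUnion ω := Finset.subset_biUnion_of_mem ω hu0
      have hcu0 : (ω u0).card = c := hmemcard ω hω.1 u0
      have hcle : c ≤ (S.biUnion ω).card := hcu0 ▸ Finset.card_le_card hsubU
      have hcs : c + 1 ≤ S.card := by omega
      have hUcard : (S.biUnion ω).card ≤ S.card - 1 := by omega
      obtain ⟨T, hUT, -, hTcard⟩ := Finset.exists_subsuperset_card_eq
        (Finset.subset_univ (S.biUnion ω)) hUcard
        (by rw [Finset.card_univ, Fintype.card_fin]; omega)
      rw [Finset.mem_biUnion]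
      refine ⟨S.card, Finset.mem_Icc.2 ⟨hcs, h2⟩, ?_⟩
      rw [Finset.mem_biUnion]
      refine ⟨S, Finset.mem_powersetCard.2 ⟨Finset.subset_univ _, rfl⟩, ?_⟩
      rw [Finset.mem_biUnion]
      refine ⟨T, Finset.mem_powersetCard.2 ⟨Finset.subset_univ _, hTcard⟩, ?_⟩
      rw [Finset.mem_filter]
      exact ⟨hω.1, fun u hu => (Finset.subset_biUnion_of_mem ω hu).trans hUT⟩
    have hnat : (Ω.filter fun ω => ¬ hallOK ω).card ≤
        ∑ s ∈ Finset.Icc (c+1) k, (n.choose s) * ((m.choose (s-1)) *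
          (((s-1).choose c)^s * (m.choose c)^(n-s))) := by
      refine le_trans (Finset.card_le_card hsubset) (le_trans Finset.card_biUnion_le ?_)
      apply Finset.sum_le_sum
      intro s _
      refine le_trans Finset.card_biUnion_le ?_
      have hinner : ∀ S ∈ Finset.powersetCard s (Finset.univ : Finset (Fin n)),
          ((Finset.powersetCard (s-1) (Finset.univ : Finset (Fin m))).biUnion (fun T =>
            Ω.filter (fun ω => ∀ u ∈ S, ω u ⊆ T))).card ≤
          (m.choose (s-1)) * (((s-1).choose c)^s * (m.choose c)^(n-s)) := by
        intro S hS
        refine le_trans Finset.card_biUnion_le ?_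
        have hScard : S.card = s := (Finset.mem_powersetCard.1 hS).2
        have hTcount : ∀ T ∈ Finset.powersetCard (s-1) (Finset.univ : Finset (Fin m)),
            (Ω.filter (fun ω => ∀ u ∈ S, ω u ⊆ T)).card
              = ((s-1).choose c)^s * (m.choose c)^(n-s) := by
          intro T hT
          have hTcard : T.card = s-1 := (Finset.mem_powersetCard.1 hT).2
          rw [hΩ, hD, count_E n m c S T, hTcard, hScard]
        calc ∑ T ∈ Finset.powersetCard (s-1) (Finset.univ : Finset (Fin m)),
              (Ω.filter (fun ω => ∀ u ∈ S, ω u ⊆ T)).card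
            = ∑ _T ∈ Finset.powersetCard (s-1) (Finset.univ : Finset (Fin m)),
              (((s-1).choose c)^s * (m.choose c)^(n-s)) := Finset.sum_congr rfl hTcount
          _ = (m.choose (s-1)) * (((s-1).choose c)^s * (m.choose c)^(n-s)) := by
              rw [Finset.sum_const, Finset.card_powersetCard, Finset.card_univ,
                Fintype.card_fin, smul_eq_mul]
          _ ≤ (m.choose (s-1)) * (((s-1).choose c)^s * (m.choose c)^(n-s)) := le_rfl
      calc ∑ S ∈ Finset.powersetCard s (Finset.univ : Finset (Fin n)),
            ((Finset.powersetCard (s-1) (Finset.univ : Finset (Fin m))).biUnion (fun T =>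
              Ω.filter (fun ω => ∀ u ∈ S, ω u ⊆ T))).card
          ≤ ∑ _S ∈ Finset.powersetCard s (Finset.univ : Finset (Fin n)),
            (m.choose (s-1)) * (((s-1).choose c)^s * (m.choose c)^(n-s)) :=
            Finset.sum_le_sum hinner
        _ = (n.choose s) * ((m.choose (s-1)) * (((s-1).choose c)^s * (m.choose c)^(n-s))) := by
            rw [Finset.sum_const, Finset.card_powersetCard, Finset.card_univ,
              Fintype.card_fin, smul_eq_mul]
    by_cases hck : c + 1 ≤ k
    · have hterm : ∀ s ∈ Finset.Icc (c+1) k,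
          (((n.choose s) * ((m.choose (s-1)) * (((s-1).choose c)^s * (m.choose c)^(n-s))) : ℕ) : ℝ)
            ≤ (m.choose c:ℝ)^n / ((2*(k:ℝ))^k) := by
        intro s hs
        rw [Finset.mem_Icc] at hs
        obtain ⟨hcs, hsk⟩ := hs
        have hsn : s ≤ n := hsk.trans hkn
        have hs1 : 1 ≤ s := by omega
        -- individual bounds
        have t1 : (n.choose s : ℝ) ≤ (n:ℝ)^s := by exact_mod_cast Nat.choose_le_pow n s
        have t2 : (m.choose (s-1) : ℝ) ≤ (m:ℝ)^s / m := by
          have h' : (m.choose (s-1) : ℝ) ≤ (m:ℝ)^(s-1) := by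
            exact_mod_cast Nat.choose_le_pow m (s-1)
          have he : (m:ℝ)^(s-1) = (m:ℝ)^s / m := by
            rw [eq_div_iff hm0R.ne', ← pow_succ]
            congr 1
            omega
          linarith
        have t3 : ((s-1).choose c : ℝ) ≤ 2*(k:ℝ)^c * (m.choose c:ℝ) / (m:ℝ)^c := by
          have nat1 : c.factorial * ((s-1).choose c) ≤ k^c := by
            calc c.factorial * ((s-1).choose c) = (s-1).descFactorial c :=
                  (Nat.descFactorial_eq_factorial_mul_choose _ _).symm
              _ ≤ (s-1)^c := Nat.descFactorial_le_pow _ _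
              _ ≤ k^c := Nat.pow_le_pow_left (by omega) _
          have nat2 : (m - c + 1)^c ≤ c.factorial * (m.choose c) :=
            (pow_le_descFactorial' m c hmc).trans
              (le_of_eq (Nat.descFactorial_eq_factorial_mul_choose m c))
          have hcast : ((m - c + 1 : ℕ):ℝ) = (m:ℝ) - c + 1 := by
            push_cast [Nat.cast_sub hmc]
            ring
          have hcm1 : (c:ℝ)/m ≤ 1 := by
            rw [div_le_one hm0R]; exact_mod_cast hmc
          have hber : (1:ℝ)/2 ≤ (1 - (c:ℝ)/m)^c := by
            have h := one_add_mul_le_pow (a := -((c:ℝ)/m)) (by nlinarith) c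
            rw [show (1 + -((c:ℝ)/m)) = 1 - (c:ℝ)/m by ring] at h
            have hcm2 : (c:ℝ)*((c:ℝ)/m) ≤ 1/2 := by
              rw [mul_div_assoc']
              rw [div_le_iff₀ hm0R]
              nlinarith
            nlinarith
          have real3 : (m:ℝ)^c ≤ 2*((m - c + 1 : ℕ):ℝ)^c := by
            have hmc' : (m:ℝ) - c = m * (1 - (c:ℝ)/m) := by field_simp
            have hmcnn : (0:ℝ) ≤ (m:ℝ) - c := by
              have : (c:ℝ) ≤ m := by exact_mod_cast hmc
              linarith
            calc (m:ℝ)^c = (m:ℝ)^c * 1 := (mul_one _).symm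
              _ ≤ (m:ℝ)^c * (2*(1 - (c:ℝ)/m)^c) := by
                  apply mul_le_mul_of_nonneg_left (by linarith) (by positivity)
              _ = 2*((m:ℝ)*(1 - (c:ℝ)/m))^c := by rw [mul_pow]; ring
              _ = 2*((m:ℝ) - c)^c := by rw [← hmc']
              _ ≤ 2*((m:ℝ) - c + 1)^c := by
                  have := pow_le_pow_left₀ hmcnn (by linarith : (m:ℝ) - c ≤ (m:ℝ) - c + 1) c
                  linarith
              _ = 2*((m - c + 1 : ℕ):ℝ)^c := by rw [hcast]
          rw [le_div_iff₀ (by positivity : (0:ℝ) < (m:ℝ)^c)]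
          have nat1R : (c.factorial : ℝ) * ((s-1).choose c : ℝ) ≤ (k:ℝ)^c := by
            exact_mod_cast nat1
          have nat2R : (((m - c + 1 : ℕ)):ℝ)^c ≤ (c.factorial : ℝ) * (m.choose c : ℝ) := by
            exact_mod_cast nat2
          calc ((s-1).choose c : ℝ) * (m:ℝ)^c
              ≤ ((s-1).choose c : ℝ) * (2*((m - c + 1 : ℕ):ℝ)^c) :=
                mul_le_mul_of_nonneg_left real3 (by positivity)
            _ = 2 * (((s-1).choose c : ℝ) * ((m - c + 1 : ℕ):ℝ)^c) := by ring
            _ ≤ 2 * (((s-1).choose c : ℝ) * ((c.factorial : ℝ) * (m.choose c : ℝ))) := by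
                apply mul_le_mul_of_nonneg_left _ (by norm_num)
                exact mul_le_mul_of_nonneg_left nat2R (by positivity)
            _ = 2 * (((c.factorial : ℝ) * ((s-1).choose c : ℝ)) * (m.choose c : ℝ)) := by ring
            _ ≤ 2 * ((k:ℝ)^c * (m.choose c : ℝ)) := by
                apply mul_le_mul_of_nonneg_left _ (by norm_num)
                exact mul_le_mul_of_nonneg_right nat1R (by positivity)
            _ = 2*(k:ℝ)^c * (m.choose c:ℝ) := by ring
        -- combine the three
        have hstep1 : (((n.choose s) * ((m.choose (s-1)) *
              (((s-1).choose c)^s * (m.choose c)^(n-s))) : ℕ) : ℝ)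
            ≤ (n:ℝ)^s * (((m:ℝ)^s/m) *
              ((2*(k:ℝ)^c * (m.choose c:ℝ) / (m:ℝ)^c)^s * (m.choose c:ℝ)^(n-s))) := by
          push_cast
          gcongr
        have hstep2 : (n:ℝ)^s * (((m:ℝ)^s/m) *
              ((2*(k:ℝ)^c * (m.choose c:ℝ) / (m:ℝ)^c)^s * (m.choose c:ℝ)^(n-s)))
            = (m.choose c:ℝ)^n / m * (2*(n:ℝ)*(k:ℝ)^c*(m:ℝ)/(m:ℝ)^c)^s := by
          have hCn : (m.choose c:ℝ)^s * (m.choose c:ℝ)^(n-s) = (m.choose c:ℝ)^n := by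
            rw [← pow_add]
            congr 1
            omega
          field_simp
          rw [← hCn]
          ring
        have hbb : 2*(n:ℝ)*(k:ℝ)^c*(m:ℝ)/(m:ℝ)^c ≤ β/(2*(k:ℝ)) := by
          rw [div_le_div_iff₀ (by positivity) (by positivity)]
          have hn' : (n:ℝ) * (4*(k:ℝ)^(c+1)) ≤ (m:ℝ)^(c-1) * β := by
            have h := hnle
            rw [hrpow_split] at h
            calc (n:ℝ) * (4*(k:ℝ)^(c+1))
                ≤ ((m:ℝ)^(c-1) * β / (4 * (k:ℝ)^(c+1))) * (4*(k:ℝ)^(c+1)) :=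
                  mul_le_mul_of_nonneg_right h (by positivity)
              _ = (m:ℝ)^(c-1) * β := by field_simp
          have hmsplit : (m:ℝ)^c = (m:ℝ)^(c-1) * m := by
            rw [← pow_succ]
            congr 1
            omega
          have hkpow : (k:ℝ)^(c+1) = (k:ℝ)^c * k := pow_succ _ _
          calc 2*(n:ℝ)*(k:ℝ)^c*(m:ℝ)*(2*(k:ℝ)) = ((n:ℝ)*(4*(k:ℝ)^(c+1)))*(m:ℝ) := by
                rw [hkpow]; ring
            _ ≤ ((m:ℝ)^(c-1) * β)*(m:ℝ) := mul_le_mul_of_nonneg_right hn' hm0R.le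
            _ = β*(m:ℝ)^c := by rw [hmsplit]; ring
        have hbase1 : (1:ℝ) ≤ β/(2*(k:ℝ)) := (one_le_div (by positivity)).2 hβ2k
        have hbbpow : (2*(n:ℝ)*(k:ℝ)^c*(m:ℝ)/(m:ℝ)^c)^s ≤ (m:ℝ)/((2*(k:ℝ))^k) := by
          calc (2*(n:ℝ)*(k:ℝ)^c*(m:ℝ)/(m:ℝ)^c)^s ≤ (β/(2*(k:ℝ)))^s :=
                pow_le_pow_left₀ (by positivity) hbb s
            _ ≤ (β/(2*(k:ℝ)))^k := pow_le_pow_right₀ hbase1 hsk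
            _ = β^k/((2*(k:ℝ))^k) := div_pow _ _ _
            _ = (m:ℝ)/((2*(k:ℝ))^k) := by
                congr 1
                rw [hβ, ← Real.rpow_natCast ((m:ℝ) ^ ((1:ℝ)/(k:ℝ))) k, ← Real.rpow_mul hm0R.le]
                rw [one_div_mul_cancel (by exact_mod_cast hk.ne' : (k:ℝ) ≠ 0), Real.rpow_one]
        calc (((n.choose s) * ((m.choose (s-1)) *
              (((s-1).choose c)^s * (m.choose c)^(n-s))) : ℕ) : ℝ)
            ≤ (m.choose c:ℝ)^n / m * (2*(n:ℝ)*(k:ℝ)^c*(m:ℝ)/(m:ℝ)^c)^s := by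
              rw [← hstep2]; exact hstep1
          _ ≤ (m.choose c:ℝ)^n / m * ((m:ℝ)/((2*(k:ℝ))^k)) :=
              mul_le_mul_of_nonneg_left hbbpow (by positivity)
          _ = (m.choose c:ℝ)^n / ((2*(k:ℝ))^k) := by
              field_simp
      have hk2 : 2 ≤ k := by omega
      have h4k : 4*(k:ℝ) ≤ (2*(k:ℝ))^k := by
        have hnat4 : 4*k ≤ (2*k)^k := by
          calc 4*k ≤ 4*k^2 := by nlinarith
            _ = (2*k)^2 := by ring
            _ ≤ (2*k)^k := Nat.pow_le_pow_right (by omega) hk2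
        exact_mod_cast hnat4
      have hIcc : ((Finset.Icc (c+1) k).card : ℝ) ≤ (k:ℝ) := by
        rw [Nat.card_Icc]
        have : k + 1 - (c+1) ≤ k := by omega
        exact_mod_cast this
      calc ((Ω.filter fun ω => ¬ hallOK ω).card : ℝ)
          ≤ (((∑ s ∈ Finset.Icc (c+1) k, (n.choose s) * ((m.choose (s-1)) *
            (((s-1).choose c)^s * (m.choose c)^(n-s)))) : ℕ) : ℝ) := by exact_mod_cast hnat
        _ = ∑ s ∈ Finset.Icc (c+1) k, (((n.choose s) * ((m.choose (s-1)) *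
            (((s-1).choose c)^s * (m.choose c)^(n-s))) : ℕ) : ℝ) := by push_cast; rfl
        _ ≤ ∑ _s ∈ Finset.Icc (c+1) k, (m.choose c:ℝ)^n / ((2*(k:ℝ))^k) :=
            Finset.sum_le_sum hterm
        _ = ((Finset.Icc (c+1) k).card : ℝ) * ((m.choose c:ℝ)^n / ((2*(k:ℝ))^k)) := by
            rw [Finset.sum_const, nsmul_eq_mul]
        _ ≤ (k:ℝ) * ((m.choose c:ℝ)^n / ((2*(k:ℝ))^k)) :=
            mul_le_mul_of_nonneg_right hIcc (by positivity)
        _ ≤ (m.choose c:ℝ)^n / 4 := by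
            rw [mul_div_assoc']
            rw [div_le_div_iff₀ (by positivity) (by norm_num)]
            have hCnn : (0:ℝ) ≤ (m.choose c:ℝ)^n := by positivity
            nlinarith
    · have hempty : Finset.Icc (c+1) k = ∅ := Finset.Icc_eq_empty (by omega)
      rw [hempty] at hnat
      simp only [Finset.sum_empty, Nat.le_zero] at hnat
      rw [hnat]
      simp only [Nat.cast_zero]
      positivity
  -- combine
  have hsplit : Ω.filter (fun ω => ¬ (degOK ω ∧ hallOK ω)) ⊆
      (Ω.filter fun ω => ¬ degOK ω) ∪ (Ω.filter fun ω => ¬ hallOK ω) := by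
    intro ω hω
    rw [Finset.mem_filter] at hω
    rw [Finset.mem_union, Finset.mem_filter, Finset.mem_filter]
    tauto
  have hbadcard : ((Ω.filter (fun ω => ¬ (degOK ω ∧ hallOK ω))).card : ℝ)
      ≤ (m.choose c:ℝ)^n / 2 := by
    have h1 : (Ω.filter (fun ω => ¬ (degOK ω ∧ hallOK ω))).card
        ≤ (Ω.filter fun ω => ¬ degOK ω).card + (Ω.filter fun ω => ¬ hallOK ω).card :=
      le_trans (Finset.card_le_card hsplit) (Finset.card_union_le _ _)
    have h2 : ((Ω.filter (fun ω => ¬ (degOK ω ∧ hallOK ω))).card : ℝ)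
        ≤ ((Ω.filter fun ω => ¬ degOK ω).card : ℝ) + ((Ω.filter fun ω => ¬ hallOK ω).card : ℝ) := by
      exact_mod_cast h1
    linarith
  have hgood : (Ω.filter (fun ω => degOK ω ∧ hallOK ω)).Nonempty := by
    rw [← Finset.card_pos]
    by_contra hcon
    push_neg at hcon
    interval_cases h : (Ω.filter (fun ω => degOK ω ∧ hallOK ω)).card
    · have hid : (Ω.filter (fun ω => degOK ω ∧ hallOK ω)).card
          + (Ω.filter (fun ω => ¬ (degOK ω ∧ hallOK ω))).card = Ω.card :=
        Finset.card_filter_add_card_filter_not (p := fun ω => degOK ω ∧ hallOK ω)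
      rw [h, zero_add] at hid
      have : ((Ω.filter (fun ω => ¬ (degOK ω ∧ hallOK ω))).card : ℝ) = (m.choose c:ℝ)^n := by
        rw [hid, hΩcard]; push_cast; ring
      have hpow : (1:ℝ) ≤ (m.choose c:ℝ)^n := one_le_pow₀ (by exact_mod_cast hDc1)
      rw [this] at hbadcard
      linarith
  obtain ⟨ω, hωmem⟩ := hgood
  rw [Finset.mem_filter] at hωmem
  exact ⟨ω, hmemcard ω hωmem.1, hωmem.2.1, hωmem.2.2⟩
end

section
/- Let c, k, m, n be positive integers with c + 1 ≤ k ≤ m and n ≤ m^{c-1+1/k} / (4 k^{c+1}). In the random bipartite graph in which each of n left vertices independently receives a uniformly random c-element subset of an m-element right vertex set R as its neighborhood, the expected number of pairs (S, S') with S ⊆ L, c+1 ≤ |S| ≤ k, S' ⊆ R, |S'| = |S| − 1, and Γ(S) ⊆ S' is at most 1/4; in particular, the probability that at least one such pair exists is at most 1/4. -/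
attribute [local instance] Classical.propDecidable



private lemma descFac_mul_pow_le (c : ℕ) : ∀ a m : ℕ, a ≤ m →
    a.descFactorial c * m ^ c ≤ m.descFactorial c * a ^ c := by
  induction c with
  | zero => simp
  | succ c ih =>
    intro a m h
    have h1 : (a - c) * m ≤ (m - c) * a := by
      rw [Nat.sub_mul, Nat.sub_mul]
      calc a * m - c * m ≤ a * m - c * a :=
            Nat.sub_le_sub_left (Nat.mul_le_mul_left c h) (a * m)
        _ = m * a - c * a := by rw [mul_comm]
    calc a.descFactorial (c+1) * m ^ (c+1)
        = ((a - c) * m) * (a.descFactorial c * m ^ c) := by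
          rw [Nat.descFactorial_succ, pow_succ]; ring
      _ ≤ ((m - c) * a) * (m.descFactorial c * a ^ c) :=
          Nat.mul_le_mul h1 (ih a m h)
      _ = m.descFactorial (c+1) * a ^ (c+1) := by
          rw [Nat.descFactorial_succ, pow_succ]; ring

private lemma choose_mul_pow_le (a m c : ℕ) (h : a ≤ m) :
    a.choose c * m ^ c ≤ m.choose c * a ^ c := by
  have H := descFac_mul_pow_le c a m h
  rw [Nat.descFactorial_eq_factorial_mul_choose, Nat.descFactorial_eq_factorial_mul_choose] at H
  have hf : 0 < c.factorial := Nat.factorial_pos c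
  have : c.factorial * (a.choose c * m ^ c) ≤ c.factorial * (m.choose c * a ^ c) := by
    calc c.factorial * (a.choose c * m ^ c) = c.factorial * a.choose c * m ^ c := by ring
      _ ≤ c.factorial * m.choose c * a ^ c := H
      _ = c.factorial * (m.choose c * a ^ c) := by ring
  exact Nat.le_of_mul_le_mul_left this hf

private lemma cardA (c m : ℕ) (S' : Finset (Fin m)) :
    (Finset.univ.filter fun C : {C : Finset (Fin m) // C.card = c} =>
        (C : Finset (Fin m)) ⊆ S').card = S'.card.choose c := by
  classical
  rw [← Finset.card_powersetCard c S']
  refine Finset.card_bij (fun C _ => (C : Finset (Fin m))) ?_ ?_ ?_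
  · intro C hC
    simp only [Finset.mem_filter, Finset.mem_univ, true_and] at hC
    simp [Finset.mem_powersetCard, hC, C.2]
  · intro C₁ _ C₂ _ h
    exact Subtype.ext h
  · intro t ht
    rw [Finset.mem_powersetCard] at ht
    exact ⟨⟨t, ht.2⟩, by simp [ht.1], rfl⟩

private lemma count_omega (c n m : ℕ) (S : Finset (Fin n)) (S' : Finset (Fin m)) :
    (Finset.univ.filter fun ω : Fin n → {C : Finset (Fin m) // C.card = c} =>
        S.biUnion (fun u => (ω u : Finset (Fin m))) ⊆ S').card
      = (S'.card.choose c) ^ S.card * (m.choose c) ^ (n - S.card) := by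
  classical
  have hset : (Finset.univ.filter fun ω : Fin n → {C : Finset (Fin m) // C.card = c} =>
        S.biUnion (fun u => (ω u : Finset (Fin m))) ⊆ S')
      = Fintype.piFinset (fun u => if u ∈ S then
          (Finset.univ.filter fun C : {C : Finset (Fin m) // C.card = c} =>
            (C : Finset (Fin m)) ⊆ S') else Finset.univ) := by
    ext ω
    simp only [Finset.mem_filter, Finset.mem_univ, true_and, Fintype.mem_piFinset,
      Finset.biUnion_subset]
    constructor
    · intro h u
      by_cases hu : u ∈ S <;> simp [hu, h u]
    · intro h u hu
      have := h u
      simpa [hu] using this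
  rw [hset, Fintype.card_piFinset]
  have : ∀ u : Fin n, ((if u ∈ S then
          (Finset.univ.filter fun C : {C : Finset (Fin m) // C.card = c} =>
            (C : Finset (Fin m)) ⊆ S') else Finset.univ)).card
      = if u ∈ S then S'.card.choose c else m.choose c := by
    intro u
    by_cases hu : u ∈ S
    · simp [hu, cardA]
    · simp only [hu, if_false, Finset.card_univ, Fintype.card_finset_len, Fintype.card_fin]
  simp only [this]
  rw [← Finset.prod_mul_prod_compl S]
  congr 1
  · rw [Finset.prod_congr rfl (fun u hu => if_pos hu), Finset.prod_const]
  · rw [Finset.prod_congr rfl (fun u hu => if_neg (by simpa using hu)), Finset.prod_const,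
      Finset.card_compl, Fintype.card_fin]


private lemma keyBound (c k m n s : ℕ) (hc : 0 < c) (hck : c + 1 ≤ k) (hkm : k ≤ m)
    (hnm : (n : ℝ) ≤ (m : ℝ) ^ ((c : ℝ) - 1 + 1 / (k : ℝ)) / (4 * (k : ℝ) ^ (c + 1)))
    (hs1 : c + 1 ≤ s) (hs2 : s ≤ k) :
    (n.choose s : ℝ) * (m.choose (s-1) : ℝ) *
      (((s-1).choose c : ℝ) / ((m.choose c) : ℝ)) ^ s ≤ (1/4) ^ s := by
  set M : ℝ := (m : ℝ) with hM
  set α : ℝ := (c : ℝ) - 1 + 1 / (k : ℝ) with hα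
  set a : ℕ := s - 1 with ha
  have hk2 : 2 ≤ k := le_trans (by omega) hck
  have hk0 : (0:ℝ) < (k:ℝ) := by positivity
  have hM0 : (0:ℝ) < M := by
    have : 0 < m := by omega
    rw [hM]; exact_mod_cast this
  have hM1 : (1:ℝ) ≤ M := by
    have : 1 ≤ m := by omega
    rw [hM]; exact_mod_cast this
  have ham : a ≤ m := by omega
  have hak : a ≤ k := by omega
  have hcm : c ≤ m := by omega
  have hacast : (a : ℝ) = (s : ℝ) - 1 := by
    rw [ha]; push_cast [Nat.cast_sub (by omega : 1 ≤ s)]; ring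
  -- elementary bounds
  have h1 : (n.choose s : ℝ) ≤ (n:ℝ)^s := by exact_mod_cast Nat.choose_le_pow n s
  have h2 : (m.choose a : ℝ) ≤ M^a := by rw [hM]; exact_mod_cast Nat.choose_le_pow m a
  have hchoosepos : (0:ℝ) < (m.choose c : ℝ) := by exact_mod_cast Nat.choose_pos hcm
  have h3 : ((a.choose c : ℝ)/(m.choose c : ℝ)) ≤ ((a:ℝ)^c)/(M^c) := by
    rw [div_le_div_iff₀ hchoosepos (by positivity)]
    rw [hM]
    exact_mod_cast (choose_mul_pow_le a m c ham).trans_eq (Nat.mul_comm _ _)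
  -- the rpow identity
  have key1 : ((M^α)^s) * M^(a:ℕ) = M ^ ((s:ℝ)/(k:ℝ) - 1) * (M^(c:ℕ))^s := by
    rw [← Real.rpow_natCast M a, ← Real.rpow_natCast M c,
        ← Real.rpow_natCast (M^α) s, ← Real.rpow_mul hM0.le,
        ← Real.rpow_natCast (M ^ ((c:ℝ))) s, ← Real.rpow_mul hM0.le,
        ← Real.rpow_add hM0, ← Real.rpow_add hM0]
    congr 1
    rw [hα, hacast]
    field_simp
    ring
  have hknz : ((k:ℝ)^(c+1)) ≠ 0 := by positivity
  have hMcnz : (M^c) ≠ 0 := by positivity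
  calc (n.choose s : ℝ) * (m.choose a : ℝ) * (((a).choose c : ℝ) / ((m.choose c) : ℝ)) ^ s
      ≤ (n:ℝ)^s * M^a * (((a:ℝ)^c)/(M^c))^s := by
        gcongr <;> first
          | positivity
          | exact Nat.cast_nonneg _
          | exact div_nonneg (Nat.cast_nonneg _) hchoosepos.le
          | exact h1 | exact h2 | exact h3
    _ ≤ (M^α/(4*(k:ℝ)^(c+1)))^s * M^a * (((a:ℝ)^c)/(M^c))^s := by
        gcongr <;> first
          | positivity
          | exact Nat.cast_nonneg _
          | exact hnm
    _ = M ^ ((s:ℝ)/(k:ℝ) - 1) * ((((a:ℝ)^c)/((k:ℝ)^(c+1)))^s * (1/4)^s) := by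
        have expand : (M^α/(4*(k:ℝ)^(c+1)))^s * M^a * (((a:ℝ)^c)/(M^c))^s
            = (((M^α)^s) * M^a) * ((a:ℝ)^c)^s / ((4*(k:ℝ)^(c+1))^s * (M^c)^s) := by
          rw [div_pow, div_pow]; ring
        rw [expand, key1, div_pow, div_pow]
        field_simp
        ring
    _ ≤ 1 * (((1:ℝ))^s * (1/4)^s) := by
        have hMle : M ^ ((s:ℝ)/(k:ℝ) - 1) ≤ 1 :=
          Real.rpow_le_one_of_one_le_of_nonpos hM1 (by
            rw [sub_nonpos, div_le_one hk0]
            exact_mod_cast hs2)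
        have hfrac : ((a:ℝ)^c)/((k:ℝ)^(c+1)) ≤ 1 := by
          rw [div_le_one (by positivity)]
          calc ((a:ℝ))^c ≤ (k:ℝ)^c := by
                gcongr <;> exact_mod_cast hak
            _ ≤ (k:ℝ)^(c+1) := by
                apply pow_le_pow_right₀ (by exact_mod_cast hk2.trans' (by norm_num) : (1:ℝ) ≤ (k:ℝ))
                omega
        gcongr <;> first
          | positivity
          | exact hMle
          | exact hfrac
          | exact div_nonneg (by positivity) (by positivity)
    _ = (1/4)^s := by ring

private lemma geomBound (a k : ℕ) (ha : 2 ≤ a) :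
    ∑ s ∈ Finset.Icc a k, ((1:ℝ)/4)^s ≤ 1/4 := by
  rcases le_or_gt a k with hak | hak
  · have hsub : Finset.Icc a k ⊆ Finset.Icc 2 k := by
      intro x hx; rw [Finset.mem_Icc] at *; omega
    calc ∑ s ∈ Finset.Icc a k, ((1:ℝ)/4)^s
        ≤ ∑ s ∈ Finset.Icc 2 k, ((1:ℝ)/4)^s :=
          Finset.sum_le_sum_of_subset_of_nonneg hsub (fun i _ _ => by positivity)
      _ ≤ 1/4 := by
          have hdec : Finset.Icc 2 k = Finset.range (k+1) \ Finset.range 2 := by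
            ext x; simp only [Finset.mem_Icc, Finset.mem_sdiff, Finset.mem_range]; omega
          rw [hdec, Finset.sum_sdiff_eq_sub (by
            intro x hx; simp only [Finset.mem_range] at *; omega)]
          have h2 : ∑ s ∈ Finset.range (k+1), ((1:ℝ)/4)^s ≤ 4/3 := by
            rw [geom_sum_eq (by norm_num)]
            have hp : (0:ℝ) < (1/4:ℝ)^(k+1) := by positivity
            rw [div_le_iff_of_neg (by norm_num : (1/4:ℝ) - 1 < 0)]
            nlinarith
          have h3 : ∑ s ∈ Finset.range 2, ((1:ℝ)/4)^s = 5/4 := by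
            simp [Finset.sum_range_succ]; norm_num
          linarith
  · rw [Finset.Icc_eq_empty (by omega)]
    norm_num

/-- **Expected number of bad pairs is at most 1/4.**
With `c + 1 ≤ k ≤ m` and `n ≤ m^(c-1+1/k)/(4k^(c+1))`, in the random bipartite graph
where each of the `n` left vertices independently receives a uniformly random
`c`-element subset of an `m`-element right vertex set as its neighborhood, the
expected number of pairs `(S, S')` with `S ⊆ L`, `c+1 ≤ |S| ≤ k`, `S' ⊆ R`,
`|S'| = |S| − 1` and `Γ(S) ⊆ S'` is at most `1/4`; in particular the probability
that at least one such pair exists is at most `1/4`. -/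
theorem stmt_5 (c k m n : ℕ) (hc : 0 < c) (hn : 0 < n) (hck : c + 1 ≤ k) (hkm : k ≤ m)
    (hnm : (n : ℝ) ≤ (m : ℝ) ^ ((c : ℝ) - 1 + 1 / (k : ℝ)) / (4 * (k : ℝ) ^ (c + 1))) :
    ((∑ ω : Fin n → {C : Finset (Fin m) // C.card = c},
        ((Finset.univ.filter fun p : Finset (Fin n) × Finset (Fin m) =>
            c + 1 ≤ p.1.card ∧ p.1.card ≤ k ∧ p.2.card = p.1.card - 1 ∧
              p.1.biUnion (fun u => (ω u : Finset (Fin m))) ⊆ p.2).card : ℝ)) /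
        (Fintype.card (Fin n → {C : Finset (Fin m) // C.card = c}) : ℝ) ≤ 1 / 4) ∧
    (((Finset.univ.filter fun ω : Fin n → {C : Finset (Fin m) // C.card = c} =>
          ∃ S : Finset (Fin n), ∃ S' : Finset (Fin m),
            c + 1 ≤ S.card ∧ S.card ≤ k ∧ S'.card = S.card - 1 ∧
              S.biUnion (fun u => (ω u : Finset (Fin m))) ⊆ S').card : ℝ) /
        (Fintype.card (Fin n → {C : Finset (Fin m) // C.card = c}) : ℝ) ≤ 1 / 4) := by
  classical
  have hcm : c ≤ m := by omega
  set N : ℕ := m.choose c with hN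
  have hN0 : 0 < N := Nat.choose_pos hcm
  have hcard : Fintype.card (Fin n → {C : Finset (Fin m) // C.card = c}) = N ^ n := by
    rw [Fintype.card_fun, Fintype.card_finset_len, Fintype.card_fin, Fintype.card_fin]
  set P : Finset (Finset (Fin n) × Finset (Fin m)) :=
    Finset.univ.filter (fun p => c + 1 ≤ p.1.card ∧ p.1.card ≤ k ∧ p.2.card = p.1.card - 1)
    with hP
  clear_value N P
  -- Step A : swap the order of summation
  have swapA : (∑ ω : Fin n → {C : Finset (Fin m) // C.card = c},
        (Finset.univ.filter fun p : Finset (Fin n) × Finset (Fin m) =>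
            c + 1 ≤ p.1.card ∧ p.1.card ≤ k ∧ p.2.card = p.1.card - 1 ∧
              p.1.biUnion (fun u => (ω u : Finset (Fin m))) ⊆ p.2).card)
      = ∑ p ∈ P, (Finset.univ.filter fun ω : Fin n → {C : Finset (Fin m) // C.card = c} =>
            p.1.biUnion (fun u => (ω u : Finset (Fin m))) ⊆ p.2).card := by
    simp only [Finset.card_filter]
    rw [Finset.sum_comm, hP, Finset.sum_filter]
    refine Finset.sum_congr rfl fun p _ => ?_
    by_cases hp : c + 1 ≤ p.1.card ∧ p.1.card ≤ k ∧ p.2.card = p.1.card - 1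
    · simp only [hp, if_true, hp.1, hp.2.1, hp.2.2, true_and]
    · have hfalse : ∀ ω : Fin n → {C : Finset (Fin m) // C.card = c},
          ¬(c + 1 ≤ p.1.card ∧ p.1.card ≤ k ∧ p.2.card = p.1.card - 1 ∧
              p.1.biUnion (fun u => (ω u : Finset (Fin m))) ⊆ p.2) :=
        fun ω h => hp ⟨h.1, h.2.1, h.2.2.1⟩
      simp only [hfalse, if_false, hp, Finset.sum_const_zero]
  -- Step A' : count for each fixed pair
  have stepCount : (∑ p ∈ P, (Finset.univ.filter
          fun ω : Fin n → {C : Finset (Fin m) // C.card = c} =>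
            p.1.biUnion (fun u => (ω u : Finset (Fin m))) ⊆ p.2).card)
      = ∑ p ∈ P, ((p.1.card - 1).choose c) ^ p.1.card * N ^ (n - p.1.card) := by
    refine Finset.sum_congr rfl fun p hp => ?_
    rw [hP, Finset.mem_filter] at hp
    rw [count_omega, hp.2.2.2, hN]
  -- Step B : group by the size of S
  have stepFib : (∑ p ∈ P, ((p.1.card - 1).choose c) ^ p.1.card * N ^ (n - p.1.card))
      = ∑ s ∈ Finset.Icc (c+1) k,
          (P.filter fun p => p.1.card = s).card * (((s - 1).choose c) ^ s * N ^ (n - s)) := by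
    have hmaps : ∀ p ∈ P, p.1.card ∈ Finset.Icc (c+1) k := by
      intro p hp
      rw [hP, Finset.mem_filter] at hp
      rw [Finset.mem_Icc]
      exact ⟨hp.2.1, hp.2.2.1⟩
    have hfw := Finset.sum_fiberwise_of_maps_to (s := P) (t := Finset.Icc (c+1) k)
      (g := fun p => p.1.card) hmaps
      (fun p : Finset (Fin n) × Finset (Fin m) =>
        ((p.1.card - 1).choose c) ^ p.1.card * N ^ (n - p.1.card))
    rw [← hfw]
    refine Finset.sum_congr rfl fun s _ => ?_
    rw [Finset.sum_congr rfl (fun p hp => by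
        rw [(Finset.mem_filter.mp hp).2]),
      Finset.sum_const, smul_eq_mul]
  -- Step C : fiber cardinality bound
  have stepC : ∀ s, (P.filter fun p => p.1.card = s).card ≤ n.choose s * m.choose (s - 1) := by
    intro s
    calc (P.filter fun p => p.1.card = s).card
        ≤ ((Finset.powersetCard s (Finset.univ : Finset (Fin n))) ×ˢ
            (Finset.powersetCard (s-1) (Finset.univ : Finset (Fin m)))).card := by
          apply Finset.card_le_card
          intro p hp
          rw [Finset.mem_filter, hP, Finset.mem_filter] at hp
          obtain ⟨⟨-, h1, h2, h3⟩, h4⟩ := hp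
          rw [Finset.mem_product, Finset.mem_powersetCard, Finset.mem_powersetCard]
          exact ⟨⟨Finset.subset_univ _, h4⟩, Finset.subset_univ _, by rw [h3, h4]⟩
      _ = n.choose s * m.choose (s - 1) := by
          rw [Finset.card_product, Finset.card_powersetCard, Finset.card_powersetCard,
            Finset.card_univ, Finset.card_univ, Fintype.card_fin, Fintype.card_fin]
  -- Real per-term bound
  have termBound : ∀ s ∈ Finset.Icc (c+1) k,
      (((P.filter fun p => p.1.card = s).card * (((s - 1).choose c) ^ s * N ^ (n - s)) : ℕ) : ℝ)
        / (((N ^ n : ℕ)) : ℝ) ≤ (1/4) ^ s := by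
    intro s hs
    rw [Finset.mem_Icc] at hs
    rcases le_or_gt s n with hsn | hsn
    · have hsplit : (N : ℝ) ^ n = (N : ℝ) ^ (n - s) * (N : ℝ) ^ s := by
        rw [← pow_add, Nat.sub_add_cancel hsn]
      have hNpos : (0:ℝ) < (N : ℝ) := by exact_mod_cast hN0
      have hfib := stepC s
      calc (((P.filter fun p => p.1.card = s).card * (((s - 1).choose c) ^ s * N ^ (n - s)) : ℕ) : ℝ)
            / (((N ^ n : ℕ)) : ℝ)
          = ((P.filter fun p => p.1.card = s).card : ℝ) *
              ((((s - 1).choose c : ℝ)) / (N : ℝ)) ^ s := by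
            push_cast
            rw [hsplit, div_pow]
            field_simp
        _ ≤ ((n.choose s : ℝ) * (m.choose (s-1) : ℝ)) *
              ((((s - 1).choose c : ℝ)) / (N : ℝ)) ^ s := by
            gcongr
            exact_mod_cast hfib
        _ ≤ (1/4) ^ s := by
            rw [mul_assoc]
            rw [← mul_assoc]
            rw [hN]
            exact keyBound c k m n s hc hck hkm hnm hs.1 hs.2
    · have hempty : (P.filter fun p => p.1.card = s) = ∅ := by
        ext p
        simp only [Finset.mem_filter, Finset.notMem_empty, iff_false, not_and]
        intro _ hcard'
        have : p.1.card ≤ n := by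
          have h5 := Finset.card_le_univ p.1
          rwa [Fintype.card_fin] at h5
        exact absurd this (by rw [hcard']; exact Nat.not_le.mpr hsn)
      rw [hempty]
      simp only [Finset.card_empty, Nat.zero_mul, Nat.cast_zero, zero_div]
      positivity
  -- Part 1
  have part1 : (∑ ω : Fin n → {C : Finset (Fin m) // C.card = c},
        ((Finset.univ.filter fun p : Finset (Fin n) × Finset (Fin m) =>
            c + 1 ≤ p.1.card ∧ p.1.card ≤ k ∧ p.2.card = p.1.card - 1 ∧
              p.1.biUnion (fun u => (ω u : Finset (Fin m))) ⊆ p.2).card : ℝ)) /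
        (Fintype.card (Fin n → {C : Finset (Fin m) // C.card = c}) : ℝ) ≤ 1 / 4 := by
    rw [hcard]
    calc (∑ ω : Fin n → {C : Finset (Fin m) // C.card = c},
            ((Finset.univ.filter fun p : Finset (Fin n) × Finset (Fin m) =>
            c + 1 ≤ p.1.card ∧ p.1.card ≤ k ∧ p.2.card = p.1.card - 1 ∧
              p.1.biUnion (fun u => (ω u : Finset (Fin m))) ⊆ p.2).card : ℝ)) /
          ((N ^ n : ℕ) : ℝ)
        = (∑ s ∈ Finset.Icc (c+1) k,
            (((P.filter fun p => p.1.card = s).card *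
              (((s - 1).choose c) ^ s * N ^ (n - s)) : ℕ) : ℝ)) / ((N ^ n : ℕ) : ℝ) := by
          rw [show (∑ ω : Fin n → {C : Finset (Fin m) // C.card = c},
            ((Finset.univ.filter fun p : Finset (Fin n) × Finset (Fin m) =>
            c + 1 ≤ p.1.card ∧ p.1.card ≤ k ∧ p.2.card = p.1.card - 1 ∧
              p.1.biUnion (fun u => (ω u : Finset (Fin m))) ⊆ p.2).card : ℝ))
            = ((∑ ω : Fin n → {C : Finset (Fin m) // C.card = c},
            (Finset.univ.filter fun p : Finset (Fin n) × Finset (Fin m) =>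
            c + 1 ≤ p.1.card ∧ p.1.card ≤ k ∧ p.2.card = p.1.card - 1 ∧
              p.1.biUnion (fun u => (ω u : Finset (Fin m))) ⊆ p.2).card : ℕ) : ℝ)
            from by push_cast; ring]
          rw [swapA, stepCount, stepFib]
          push_cast
          ring
      _ = ∑ s ∈ Finset.Icc (c+1) k,
            (((P.filter fun p => p.1.card = s).card *
              (((s - 1).choose c) ^ s * N ^ (n - s)) : ℕ) : ℝ) / ((N ^ n : ℕ) : ℝ) := by
          rw [Finset.sum_div]
      _ ≤ ∑ s ∈ Finset.Icc (c+1) k, ((1:ℝ)/4) ^ s := by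
          exact Finset.sum_le_sum termBound
      _ ≤ 1/4 := geomBound (c+1) k (Nat.succ_le_succ hc)
  refine ⟨part1, ?_⟩
  -- Part 2
  have hev : ((Finset.univ.filter fun ω : Fin n → {C : Finset (Fin m) // C.card = c} =>
          ∃ S : Finset (Fin n), ∃ S' : Finset (Fin m),
            c + 1 ≤ S.card ∧ S.card ≤ k ∧ S'.card = S.card - 1 ∧
              S.biUnion (fun u => (ω u : Finset (Fin m))) ⊆ S').card)
      ≤ ∑ ω : Fin n → {C : Finset (Fin m) // C.card = c},
        (Finset.univ.filter fun p : Finset (Fin n) × Finset (Fin m) =>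
            c + 1 ≤ p.1.card ∧ p.1.card ≤ k ∧ p.2.card = p.1.card - 1 ∧
              p.1.biUnion (fun u => (ω u : Finset (Fin m))) ⊆ p.2).card := by
    rw [Finset.card_eq_sum_ones]
    refine le_trans (Finset.sum_le_sum ?_)
      (Finset.sum_le_sum_of_subset (Finset.subset_univ _))
    intro ω hω
    rw [Finset.mem_filter] at hω
    obtain ⟨-, S, S', h1, h2, h3, h4⟩ := hω
    refine Finset.card_pos.mpr ⟨(S, S'), ?_⟩
    rw [Finset.mem_filter]
    exact ⟨Finset.mem_univ _, h1, h2, h3, h4⟩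
  calc ((Finset.univ.filter fun ω : Fin n → {C : Finset (Fin m) // C.card = c} =>
          ∃ S : Finset (Fin n), ∃ S' : Finset (Fin m),
            c + 1 ≤ S.card ∧ S.card ≤ k ∧ S'.card = S.card - 1 ∧
              S.biUnion (fun u => (ω u : Finset (Fin m))) ⊆ S').card : ℝ) /
        (Fintype.card (Fin n → {C : Finset (Fin m) // C.card = c}) : ℝ)
      ≤ (∑ ω : Fin n → {C : Finset (Fin m) // C.card = c},
        ((Finset.univ.filter fun p : Finset (Fin n) × Finset (Fin m) =>
            c + 1 ≤ p.1.card ∧ p.1.card ≤ k ∧ p.2.card = p.1.card - 1 ∧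
              p.1.biUnion (fun u => (ω u : Finset (Fin m))) ⊆ p.2).card : ℝ)) /
        (Fintype.card (Fin n → {C : Finset (Fin m) // C.card = c}) : ℝ) := by
        have hev' : ((Finset.univ.filter fun ω : Fin n → {C : Finset (Fin m) // C.card = c} =>
              ∃ S : Finset (Fin n), ∃ S' : Finset (Fin m),
                c + 1 ≤ S.card ∧ S.card ≤ k ∧ S'.card = S.card - 1 ∧
                  S.biUnion (fun u => (ω u : Finset (Fin m))) ⊆ S').card : ℝ)
            ≤ ∑ ω : Fin n → {C : Finset (Fin m) // C.card = c},
              ((Finset.univ.filter fun p : Finset (Fin n) × Finset (Fin m) =>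
                c + 1 ≤ p.1.card ∧ p.1.card ≤ k ∧ p.2.card = p.1.card - 1 ∧
                  p.1.biUnion (fun u => (ω u : Finset (Fin m))) ⊆ p.2).card : ℝ) := by
          exact_mod_cast hev
        gcongr
    _ ≤ 1/4 := part1
end

section
/- Let c, m, n be positive integers with c ≤ m. In the random bipartite graph in which each of n left vertices independently receives a uniformly random c-element subset of an m-element right vertex set as its neighborhood, the probability that there exists a right vertex v whose degree X_v satisfies |X_v − nc/m| ≥ √((n/2)·ln(4m)) is at most 1/2. -/
/-!
For a fixed right vertex `v`, the degree `X_v` is a sum of `n` independent indicators, each of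
mean `c / m`, since a uniformly random `c`-subset of an `m`-set contains `v` with probability
`c / m`. Hoeffding's inequality bounds `P(|X_v - nc/m| ≥ t)` by `2 exp(-2t²/n)`, which is
`1 / (2m)` for `t = √((n/2) ln(4m))`, and a union bound over the `m` right vertices gives `1/2`.
-/

open MeasureTheory ProbabilityTheory Finset Real

section UniformOn

variable {Ω : Type*} [Fintype Ω] [MeasurableSpace Ω] [MeasurableSingletonClass Ω]

lemma measureReal_uniformOn_univ (s : Finset Ω) :
    (uniformOn (Set.univ : Set Ω)).real s = #s / Fintype.card Ω := by
  rw [measureReal_def, uniformOn_univ, Measure.count_apply_finset, ENNReal.toReal_div]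
  simp

lemma integral_uniformOn_univ (f : Ω → ℝ) :
    ∫ x, f x ∂uniformOn Set.univ = (∑ x, f x) / Fintype.card Ω := by
  rw [integral_fintype .of_finite, sum_div]
  refine sum_congr rfl fun x _ => ?_
  rw [measureReal_def, uniformOn_univ, Measure.count_singleton]
  simp [div_eq_inv_mul]

end UniformOn

lemma ProbabilityTheory.HasSubgaussianMGF.measure_abs_ge_le {Ω : Type*} [MeasurableSpace Ω]
    {μ : Measure Ω} {X : Ω → ℝ} {c : NNReal} (h : HasSubgaussianMGF X c μ) {ε : ℝ} (hε : 0 ≤ ε) :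
    μ.real {ω | ε ≤ |X ω|} ≤ 2 * exp (-ε ^ 2 / (2 * c)) := by
  have hsplit : {ω | ε ≤ |X ω|} = {ω | ε ≤ X ω} ∪ {ω | ε ≤ (-X) ω} := by
    ext ω
    simp [le_abs]
  calc μ.real {ω | ε ≤ |X ω|} ≤ μ.real {ω | ε ≤ X ω} + μ.real {ω | ε ≤ (-X) ω} :=
        hsplit ▸ measureReal_union_le _ _
    _ ≤ exp (-ε ^ 2 / (2 * c)) + exp (-ε ^ 2 / (2 * c)) :=
        add_le_add (h.measure_ge_le hε) (h.neg.measure_ge_le hε)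
    _ = 2 * exp (-ε ^ 2 / (2 * c)) := by ring

theorem uniformOn_measureReal_abs_sum_sub_mean_ge_le {S ι : Type*} [Fintype S] [Nonempty S]
    [MeasurableSpace S] [MeasurableSingletonClass S] [Fintype ι] (f : S → ℝ) {a b : ℝ}
    (hf : ∀ x, f x ∈ Set.Icc a b) {ε : ℝ} (hε : 0 ≤ ε) :
    (uniformOn (Set.univ : Set (ι → S))).real
        {ω | ε ≤ |∑ i, (f (ω i) - (∑ x, f x) / Fintype.card S)|}
      ≤ 2 * exp (-2 * ε ^ 2 / (Fintype.card ι * (b - a) ^ 2)) := by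
  set ν : Measure S := uniformOn Set.univ
  have hμ : uniformOn (Set.univ : Set (ι → S)) = Measure.pi fun _ => ν := by
    rw [← uniformOn_pi, Set.pi_univ]
  have hsubG : HasSubgaussianMGF (fun x => f x - ν[f]) ((‖b - a‖₊ / 2) ^ 2) ν :=
    hasSubgaussianMGF_of_mem_Icc (measurable_of_finite f).aemeasurable (ae_of_all _ hf)
  have hsubG_coord (i : ι) : HasSubgaussianMGF (fun ω : ι → S => f (ω i) - ν[f])
      ((‖b - a‖₊ / 2) ^ 2) (Measure.pi fun _ => ν) := by
    refine HasSubgaussianMGF.of_map (X := fun x => f x - ν[f]) (Y := fun ω : ι → S => ω i)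
      (measurable_pi_apply i).aemeasurable ?_
    rwa [(measurePreserving_eval (fun _ => ν) i).map_eq]
  have hindep : iIndepFun (fun i (ω : ι → S) => f (ω i) - ν[f]) (Measure.pi fun _ => ν) :=
    iIndepFun_pi (Ω := fun _ => S) (𝓧 := fun _ => ℝ) (X := fun _ x => f x - ν[f])
      fun _ => (measurable_of_finite _).aemeasurable
  have hsum := HasSubgaussianMGF.sum_of_iIndepFun hindep (s := univ) fun i _ => hsubG_coord i
  rw [hμ, ← integral_uniformOn_univ]
  refine (hsum.measure_abs_ge_le hε).trans_eq ?_
  congr 2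
  push_cast
  rw [sum_const, card_univ, nsmul_eq_mul, Real.norm_eq_abs, div_pow, sq_abs,
    show (2 : ℝ) * (Fintype.card ι * ((b - a) ^ 2 / 2 ^ 2)) = Fintype.card ι * (b - a) ^ 2 / 2 by
      ring,
    div_div_eq_mul_div]
  ring

lemma card_filter_mem_powersetCard_univ_mul {α : Type*} [Fintype α] [DecidableEq α] (k : ℕ)
    (v : α) :
    #{C ∈ powersetCard k (univ : Finset α) | v ∈ C} * Fintype.card α =
      k * (Fintype.card α).choose k := by
  obtain ⟨N, hN⟩ : ∃ N, Fintype.card α = N + 1 :=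
    Nat.exists_eq_add_one.2 (Fintype.card_pos_iff.2 ⟨v⟩)
  cases k with
  | zero => simp
  | succ j =>
    simp_rw [← singleton_subset_iff (a := v)]
    rw [card_filter_powersetCard_subset _ _ _ (subset_univ _) (by simp), card_univ,
      card_singleton, hN, Nat.add_sub_cancel, Nat.add_sub_cancel, mul_comm,
      Nat.add_one_mul_choose_eq, mul_comm]

lemma sum_ite_mem_div_card_finset_len {α : Type*} [Fintype α] [DecidableEq α] {k : ℕ}
    (hk : k ≤ Fintype.card α) (v : α) :
    (∑ C : {C : Finset α // #C = k}, if v ∈ (C : Finset α) then (1 : ℝ) else 0) /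
      Fintype.card {C : Finset α // #C = k} = k / Fintype.card α := by
  have hN : (0 : ℝ) < Fintype.card α := by exact_mod_cast Fintype.card_pos_iff.2 ⟨v⟩
  have hchoose : (0 : ℝ) < (Fintype.card α).choose k := by exact_mod_cast Nat.choose_pos hk
  rw [← sum_subtype (powersetCard k univ) (fun _ => mem_powersetCard_univ)
      (fun C => if v ∈ C then (1 : ℝ) else 0),
    sum_boole, Fintype.card_finset_len, div_eq_div_iff hchoose.ne' hN.ne']
  exact_mod_cast card_filter_mem_powersetCard_univ_mul k v

theorem measureReal_le_abs_card_mem_sub_le {α ι : Type*} [Fintype α] [DecidableEq α]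
    [Fintype ι] {k : ℕ} (hk : k ≤ Fintype.card α) (v : α) {ε : ℝ} (hε : 0 ≤ ε) :
    (uniformOn (Set.univ : Set (ι → {C : Finset α // #C = k}))).real
        {ω | ε ≤ |(#{i | v ∈ (ω i : Finset α)} : ℝ) - Fintype.card ι * k / Fintype.card α|}
      ≤ 2 * exp (-2 * ε ^ 2 / Fintype.card ι) := by
  have : Nonempty {C : Finset α // #C = k} :=
    Fintype.card_pos_iff.1 (by simpa using Nat.choose_pos hk)
  let indicator (C : {C : Finset α // #C = k}) : ℝ := if v ∈ (C : Finset α) then 1 else 0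
  have hsum (ω : ι → {C : Finset α // #C = k}) :
      (#{i | v ∈ (ω i : Finset α)} : ℝ) - Fintype.card ι * k / Fintype.card α =
        ∑ i, (indicator (ω i) - (∑ C, indicator C) / Fintype.card {C : Finset α // #C = k}) := by
    rw [sum_ite_mem_div_card_finset_len hk v, sum_sub_distrib, sum_boole]
    simp [mul_div_assoc]
  simp_rw [hsum]
  simpa using uniformOn_measureReal_abs_sum_sub_mean_ge_le indicator (a := 0) (b := 1)
    (fun C => by by_cases h : v ∈ (C : Finset α) <;> simp [indicator, h]) hε

lemma two_mul_exp_neg_two_mul_sqrt_sq_div {m n : ℕ} (hn : 0 < n) (hm : 0 < m) :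
    2 * exp (-2 * √((n : ℝ) / 2 * log (4 * m)) ^ 2 / n) = 1 / (2 * m) := by
  have hm' : (1 : ℝ) ≤ m := Nat.one_le_cast.2 hm
  have hn' : (0 : ℝ) < n := Nat.cast_pos.2 hn
  have hlog : 0 ≤ log (4 * m) := log_nonneg (by linarith)
  rw [sq_sqrt (by positivity), neg_mul, neg_div,
    show 2 * ((n : ℝ) / 2 * log (4 * m)) / n = log (4 * m) by field_simp,
    exp_neg, exp_log (by positivity)]
  ring

theorem stmt_7_general (c m n : ℕ) (hn : 0 < n) (hcm : c ≤ m) :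
    ((Finset.univ.filter fun ω : Fin n → {C : Finset (Fin m) // C.card = c} =>
        ∃ v : Fin m,
          Real.sqrt ((n : ℝ) / 2 * Real.log (4 * m)) ≤
            |((Finset.univ.filter fun u : Fin n => v ∈ (ω u : Finset (Fin m))).card : ℝ) -
              (n : ℝ) * c / m|).card : ℝ) /
      (Fintype.card (Fin n → {C : Finset (Fin m) // C.card = c}) : ℝ) ≤ 1 / 2 := by
  have htail (v : Fin m) :
      (uniformOn Set.univ).real {ω : Fin n → {C : Finset (Fin m) // #C = c} |
        √((n : ℝ) / 2 * log (4 * m)) ≤ |(#{u | v ∈ (ω u : Finset (Fin m))} : ℝ) - n * c / m|}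
        ≤ 1 / (2 * m) := by
    have h := measureReal_le_abs_card_mem_sub_le (ι := Fin n) (by simpa using hcm) v
      (sqrt_nonneg ((n : ℝ) / 2 * log (4 * m)))
    rwa [Fintype.card_fin, Fintype.card_fin, two_mul_exp_neg_two_mul_sqrt_sq_div hn v.pos] at h
  rw [← measureReal_uniformOn_univ, coe_filter_univ, Set.ofPred_exists]
  calc _ ≤ ∑ v : Fin m, _ := measureReal_iUnion_fintype_le _
    _ ≤ ∑ _v : Fin m, 1 / (2 * (m : ℝ)) := sum_le_sum fun v _ => htail v
    _ = m / m / 2 := by simp only [sum_const, card_univ, Fintype.card_fin, nsmul_eq_mul]; ring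
    _ ≤ 1 / 2 := by gcongr; exact div_self_le_one _

/-- **Union bound over all servers' degree deviations.**
In the random bipartite graph where each of the `n` left vertices independently
receives a uniformly random `c`-element subset of an `m`-element right vertex set as
its neighborhood, the probability that some right vertex `v` has degree `X_v` with
`|X_v − nc/m| ≥ √((n/2)·ln(4m))` is at most `1/2`. -/
theorem stmt_7 (c m n : ℕ) (hc : 0 < c) (hn : 0 < n) (hm : 0 < m) (hcm : c ≤ m) :
    ((Finset.univ.filter fun ω : Fin n → {C : Finset (Fin m) // C.card = c} =>
        ∃ v : Fin m,
          Real.sqrt ((n : ℝ) / 2 * Real.log (4 * m)) ≤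
            |((Finset.univ.filter fun u : Fin n => v ∈ (ω u : Finset (Fin m))).card : ℝ) -
              (n : ℝ) * c / m|).card : ℝ) /
      (Fintype.card (Fin n → {C : Finset (Fin m) // C.card = c}) : ℝ) ≤ 1 / 2 :=
  stmt_7_general c m n hn hcm
end

section
/- For every even integer t ≥ 4 there exists a constant C_t (depending only on t, with C_t < 1 for t ≥ 6) such that the following holds: if X_1, ..., X_n are t-wise independent random variables each taking values in the interval [0, 1], X = X_1 + ⋯ + X_n, and a > 0 is a real number, then Pr[ |X − E[X]| ≥ a ] ≤ C_t · (n·t / a²)^{t/2}. -/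
/-!
Centre the variables: `Y i = X i - E[X i]` has mean zero and `|Y i| ≤ 1`. In the multinomial
expansion of `E[(∑ Y i)^t]` each monomial involves at most `t` of the `Y i`, so `t`-wise
independence factors its expectation into moments `E[Y i ^ b]`, which vanish for `b = 1` and
are at most `1` in absolute value otherwise. Times `x^t`, the resulting bound is at most
`t! (∑_{b ≠ 1} x^b / b!)^n ≤ t! (e^x - x)^n ≤ t! e^{2 n x^2 / 3}`; at `x^2 = t / n` this gives
`E[(∑ Y i)^t] ≤ t! e^{2t/3} (n/t)^{t/2}`. Markov's inequality for the `t`-th power then yields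
the bound with `C_t = t! e^{2t/3} / t^t`; finally `C_6 = 720 e^4 / 6^6 < 1` and
`C_{t+1} / C_t = e^{2/3} (1 + 1/t)^{-t} ≤ e^{2/3} / 2 < 1`.
-/

open MeasureTheory ProbabilityTheory Finset Real
open scoped Nat

lemma exp_sub_le_exp_two_thirds_mul_sq {x : ℝ} (hx : 0 ≤ x) :
    exp x - x ≤ exp (2 / 3 * x ^ 2) := by
  have hquad : 1 + 2 / 3 * x ^ 2 + (2 / 3 * x ^ 2) ^ 2 / 2 ≤ exp (2 / 3 * x ^ 2) :=
    quadratic_le_exp_of_nonneg (by positivity)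
  have taylor {y : ℝ} (hy0 : 0 ≤ y) (hy1 : y ≤ 1) :
      exp y ≤ 1 + y + y ^ 2 / 2 + y ^ 3 / 6 + y ^ 4 * 5 / 96 := by
    have h := exp_bound' hy0 hy1 (n := 4) (by norm_num)
    norm_num [sum_range_succ, Nat.factorial] at h
    linarith
  rcases le_or_gt x 1 with hx1 | hx1
  · have := taylor hx hx1
    nlinarith [pow_le_pow_of_le_one hx hx1 (by norm_num : 2 ≤ 3),
      pow_le_pow_of_le_one hx hx1 (by norm_num : 2 ≤ 4), pow_nonneg hx 4]
  rcases le_or_gt x (3 / 2) with hx2 | hx2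
  · obtain ⟨y, rfl⟩ : ∃ y, x = 1 + y := ⟨x - 1, by ring⟩
    have hy0 : 0 ≤ y := by linarith
    have hexp :
        exp (1 + y) ≤ 2.7182818286 * (1 + y + y ^ 2 / 2 + y ^ 3 / 6 + y ^ 4 * 5 / 96) := by
      rw [exp_add]
      exact mul_le_mul exp_one_lt_d9.le (taylor hy0 (by linarith)) (exp_pos y).le (by norm_num)
    nlinarith [pow_nonneg hy0 2, pow_nonneg hy0 3, pow_nonneg hy0 4]
  · have : x ≤ 2 / 3 * x ^ 2 := by nlinarith
    linarith [exp_le_exp.2 this]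

lemma factorial_mul_exp_lt_pow {t : ℕ} (ht : 6 ≤ t) :
    (t ! : ℝ) * exp (2 * t / 3) < (t : ℝ) ^ t := by
  induction t, ht using Nat.le_induction with
  | base =>
    have he2 : exp 1 ^ 2 < 7.39 := by nlinarith [exp_one_lt_d9, exp_pos 1]
    have he4 : exp 4 < 55 := by
      rw [show (4 : ℝ) = (4 : ℕ) * 1 by norm_num, exp_nat_mul]
      nlinarith [pow_pos (exp_pos 1) 2]
    norm_num [Nat.factorial]
    linarith
  | succ t ht ih =>
    have htpos : (0 : ℝ) < t := by positivity
    have hexp : exp (2 / 3) < 2 := by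
      refine lt_of_pow_lt_pow_left₀ 3 (by norm_num) ?_
      rw [← exp_nat_mul, show ((3 : ℕ) : ℝ) * (2 / 3) = (2 : ℕ) * 1 by norm_num, exp_nat_mul]
      nlinarith [exp_one_lt_d9, exp_pos 1]
    have hbern : 2 * (t : ℝ) ^ t ≤ ((t : ℝ) + 1) ^ t := by
      have h := one_add_mul_le_pow (by linarith [one_div_pos.2 htpos] : (-2 : ℝ) ≤ 1 / t) t
      rw [mul_one_div_cancel htpos.ne'] at h
      calc 2 * (t : ℝ) ^ t ≤ (1 + 1 / t) ^ t * (t : ℝ) ^ t := by gcongr; linarith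
        _ = ((t : ℝ) + 1) ^ t := by rw [← mul_pow]; congr 1; field_simp
    calc ((t + 1)! : ℝ) * exp (2 * ((t + 1 : ℕ) : ℝ) / 3)
        = ((t : ℝ) + 1) * ((t ! * exp (2 * t / 3)) * exp (2 / 3)) := by
          rw [Nat.factorial_succ, show 2 * ((t + 1 : ℕ) : ℝ) / 3 = 2 * t / 3 + 2 / 3 by
            push_cast; ring, exp_add]
          push_cast; ring
      _ < ((t : ℝ) + 1) * ((t : ℝ) ^ t * 2) := by gcongr
      _ ≤ ((t : ℝ) + 1) * ((t : ℝ) + 1) ^ t := by gcongr; linarith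
      _ = ((t + 1 : ℕ) : ℝ) ^ (t + 1) := by push_cast; ring

lemma sum_multinomial_mul_prod_mul_pow_le {ι : Type*} [Fintype ι] [DecidableEq ι]
    {w : ℕ → ℝ} (hw : ∀ b, 0 ≤ w b) {x : ℝ} (hx : 0 ≤ x) (t : ℕ) :
    (∑ k ∈ piAntidiag (univ : Finset ι) t, (Nat.multinomial univ k : ℝ) * ∏ i, w (k i)) *
        x ^ t ≤
      t ! * (∑ b ∈ range (t + 1), w b * x ^ b / b !) ^ Fintype.card ι := by
  have hterm : ∀ k ∈ piAntidiag (univ : Finset ι) t,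
      (Nat.multinomial univ k : ℝ) * (∏ i, w (k i)) * x ^ t =
        t ! * ∏ i, w (k i) * x ^ k i / (k i)! := by
    intro k hk
    rw [mem_piAntidiag] at hk
    have hspec : (t ! : ℝ) = (∏ i, ((k i)! : ℝ)) * Nat.multinomial univ k := by
      exact_mod_cast (hk.1 ▸ Nat.multinomial_spec univ k).symm
    rw [hspec, ← hk.1, ← prod_pow_eq_pow_sum, prod_div_distrib, prod_mul_distrib]
    field_simp
  rw [sum_mul, sum_congr rfl hterm, ← mul_sum, ← card_univ (α := ι), ← prod_const,
    prod_univ_sum]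
  refine mul_le_mul_of_nonneg_left ?_ (by positivity)
  refine sum_le_sum_of_subset_of_nonneg (fun k hk => ?_) fun p _ _ =>
    prod_nonneg fun i _ => by have := hw (p i); positivity
  rw [mem_piAntidiag] at hk
  simp only [Fintype.mem_piFinset, mem_range, Nat.lt_succ_iff]
  exact fun i => hk.1 ▸ single_le_sum (fun j _ => Nat.zero_le (k j)) (mem_univ i)

lemma sum_range_ite_mul_pow_div_factorial_le {x : ℝ} (hx : 0 ≤ x) {t : ℕ} (ht : t ≠ 0) :
    ∑ b ∈ range (t + 1), (if b = 1 then 0 else 1) * x ^ b / b ! ≤ exp x - x := by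
  have h1 : 1 ∈ range (t + 1) := by simp; omega
  have hexp := sum_le_exp_of_nonneg hx (t + 1)
  rw [← add_sum_erase _ _ h1] at hexp ⊢
  rw [sum_congr rfl fun b hb => by rw [if_neg (ne_of_mem_erase hb), one_mul]]
  norm_num at hexp ⊢
  linarith

def KWiseIndepFun {Ω ι β : Type*} [MeasurableSpace Ω] [MeasurableSpace β] (k : ℕ)
    (X : ι → Ω → β) (μ : Measure Ω) : Prop :=
  ∀ s : Finset ι, #s ≤ k → iIndepFun (fun i : s => X i) μ

section Moments

variable {Ω : Type*} [MeasurableSpace Ω] {μ : Measure Ω}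

lemma KWiseIndepFun.comp {ι β γ : Type*} [MeasurableSpace β] [MeasurableSpace γ] {k : ℕ}
    {X : ι → Ω → β} (hX : KWiseIndepFun k X μ) {g : ι → β → γ} (hg : ∀ i, Measurable (g i)) :
    KWiseIndepFun k (fun i => g i ∘ X i) μ :=
  fun s hs => (hX s hs).comp (fun i : s => g i) fun i => hg i

lemma measureReal_abs_ge_le_integral_pow_div {f : Ω → ℝ} {t : ℕ} (ht : Even t) (ht0 : t ≠ 0)
    (hf : Integrable (fun ω => f ω ^ t) μ) {a : ℝ} (ha : 0 < a) :
    μ.real {ω | a ≤ |f ω|} ≤ (∫ ω, f ω ^ t ∂μ) / a ^ t := by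
  have hset : {ω | a ≤ |f ω|} = {ω | a ^ t ≤ f ω ^ t} := by
    ext ω
    change a ≤ |f ω| ↔ a ^ t ≤ f ω ^ t
    rw [← ht.pow_abs (f ω), pow_le_pow_iff_left₀ ha.le (abs_nonneg _) ht0]
  rw [le_div_iff₀' (pow_pos ha t), hset]
  exact mul_meas_ge_le_integral_of_nonneg (ae_of_all _ fun ω => ht.pow_nonneg (f ω)) hf (a ^ t)

lemma integral_sum_pow_eq_sum_multinomial [IsFiniteMeasure μ] {ι : Type*} [Fintype ι]
    [DecidableEq ι] {Y : ι → Ω → ℝ} (hY : ∀ i, Measurable (Y i)) (hYb : ∀ i ω, |Y i ω| ≤ 1)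
    (t : ℕ) :
    ∫ ω, (∑ i, Y i ω) ^ t ∂μ =
      ∑ k ∈ piAntidiag (univ : Finset ι) t, (Nat.multinomial univ k : ℝ) *
        ∫ ω, ∏ i, Y i ω ^ k i ∂μ := by
  have hint (k : ι → ℕ) : Integrable (fun ω => ∏ i, Y i ω ^ k i) μ :=
    .of_bound (by fun_prop) 1 <| ae_of_all _ fun ω => by
      simpa [abs_prod, abs_pow] using
        prod_le_one (fun i _ => by positivity) fun i _ => pow_le_one₀ (abs_nonneg _) (hYb i ω)
  simp_rw [sum_pow_eq_sum_piAntidiag]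
  rw [integral_finsetSum _ fun k _ => (hint k).const_mul _]
  simp_rw [integral_const_mul]

variable [IsProbabilityMeasure μ]

lemma abs_sub_integral_le_one {X : Ω → ℝ} (hX : ∀ ω, X ω ∈ Set.Icc 0 1) (ω : Ω) :
    |X ω - ∫ ω', X ω' ∂μ| ≤ 1 := by
  have h0 : 0 ≤ ∫ ω', X ω' ∂μ := integral_nonneg fun ω' => (hX ω').1
  have h1 : ∫ ω', X ω' ∂μ ≤ 1 := by
    simpa using integral_mono_of_nonneg (μ := μ) (ae_of_all _ fun ω' => (hX ω').1)
      (integrable_const 1) (ae_of_all _ fun ω' => (hX ω').2)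
  rw [abs_le]
  constructor <;> linarith [(hX ω).1, (hX ω).2]

lemma abs_integral_pow_le_ite {Y : Ω → ℝ} (hYb : ∀ ω, |Y ω| ≤ 1) (hY0 : ∫ ω, Y ω ∂μ = 0)
    (b : ℕ) : |∫ ω, Y ω ^ b ∂μ| ≤ if b = 1 then 0 else 1 := by
  split_ifs with hb
  · simp [hb, hY0]
  · simpa using norm_integral_le_of_norm_le_const (μ := μ) (f := fun ω => Y ω ^ b) (C := 1)
      (ae_of_all _ fun ω => by simpa [abs_pow] using pow_le_one₀ (abs_nonneg _) (hYb ω))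

lemma integral_prod_pow_eq_prod_integral {ι : Type*} [Fintype ι] {X : ι → Ω → ℝ}
    (hX : ∀ i, Measurable (X i)) {t : ℕ} (hind : KWiseIndepFun t X μ) {k : ι → ℕ}
    (hk : ∑ i, k i ≤ t) :
    ∫ ω, ∏ i, X i ω ^ k i ∂μ = ∏ i, ∫ ω, X i ω ^ k i ∂μ := by
  classical
  set s := univ.filter fun i => k i ≠ 0
  have hs : #s ≤ t := by
    calc #s = ∑ i ∈ s, 1 := card_eq_sum_ones s
      _ ≤ ∑ i ∈ s, k i :=
        sum_le_sum fun i hi => Nat.one_le_iff_ne_zero.2 (mem_filter.1 hi).2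
      _ ≤ ∑ i, k i := sum_le_sum_of_subset (subset_univ s)
      _ ≤ t := hk
  have hoff : ∀ i ∉ s, k i = 0 := fun i hi => by simpa [s] using hi
  have hfactor := (hind s hs).integral_fun_prod_comp (X := fun i : s => X i)
    (f := fun i x => x ^ k (i : ι))
    (fun i => (hX i).aemeasurable) fun i => (measurable_id.pow_const _).aestronglyMeasurable
  have hsupp (g : ι → ℕ → ℝ) (hg : ∀ i, g i 0 = 1) : ∏ i : s, g i (k i) = ∏ i, g i (k i) :=
    (prod_coe_sort s fun i => g i (k i)).trans <|
      prod_subset (subset_univ s) fun i _ hi => by rw [hoff i hi, hg]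
  have hpow (ω : Ω) := hsupp (fun i b => X i ω ^ b) fun i => pow_zero _
  have hint := hsupp (fun i b => ∫ ω, X i ω ^ b ∂μ) fun i => by simp
  simpa only [hpow, hint] using hfactor

lemma integral_sum_pow_le {ι : Type*} [Fintype ι] {Y : ι → Ω → ℝ} (hY : ∀ i, Measurable (Y i))
    (hYb : ∀ i ω, |Y i ω| ≤ 1) (hY0 : ∀ i, ∫ ω, Y i ω ∂μ = 0) {t : ℕ} (ht : Even t)
    (ht0 : t ≠ 0) (hind : KWiseIndepFun t Y μ) :
    ∫ ω, (∑ i, Y i ω) ^ t ∂μ ≤ t ! * exp (2 * t / 3) * (Fintype.card ι / t) ^ (t / 2) := by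
  classical
  rcases isEmpty_or_nonempty ι with hι | hι
  · simp only [univ_eq_empty, sum_empty, zero_pow ht0, integral_zero]
    positivity
  have hn : (0 : ℝ) < Fintype.card ι := Nat.cast_pos.2 Fintype.card_pos
  have htR : (0 : ℝ) < t := Nat.cast_pos.2 (Nat.pos_of_ne_zero ht0)
  set x := √(t / Fintype.card ι)
  have hx : 0 < x := sqrt_pos.2 (by positivity)
  have hxt : x ^ t = (t / Fintype.card ι) ^ (t / 2) := by
    conv_lhs => rw [← Nat.two_mul_div_two_of_even ht, pow_mul, sq_sqrt (by positivity)]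
  set w : ℕ → ℝ := fun b => if b = 1 then 0 else 1
  have hw (b : ℕ) : 0 ≤ w b := by simp only [w]; split_ifs <;> norm_num
  have hmoment : ∫ ω, (∑ i, Y i ω) ^ t ∂μ ≤
      ∑ k ∈ piAntidiag (univ : Finset ι) t, (Nat.multinomial univ k : ℝ) * ∏ i, w (k i) := by
    rw [integral_sum_pow_eq_sum_multinomial hY hYb]
    refine sum_le_sum fun k hk => mul_le_mul_of_nonneg_left ?_ (Nat.cast_nonneg _)
    rw [integral_prod_pow_eq_prod_integral hY hind (mem_piAntidiag.1 hk).1.le]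
    exact (le_abs_self _).trans <| (abs_prod _ _).trans_le <|
      prod_le_prod (fun _ _ => abs_nonneg _) fun i _ =>
        abs_integral_pow_le_ite (hYb i) (hY0 i) _
  have hgen : (∑ b ∈ range (t + 1), w b * x ^ b / b !) ^ Fintype.card ι ≤ exp (2 * t / 3) :=
    calc (∑ b ∈ range (t + 1), w b * x ^ b / b !) ^ Fintype.card ι
        ≤ exp (2 / 3 * x ^ 2) ^ Fintype.card ι := by
          gcongr
          exact (sum_range_ite_mul_pow_div_factorial_le hx.le ht0).trans
            (exp_sub_le_exp_two_thirds_mul_sq hx.le)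
      _ = exp (2 * t / 3) := by
          rw [← exp_nat_mul, sq_sqrt (by positivity)]
          field_simp
  calc ∫ ω, (∑ i, Y i ω) ^ t ∂μ
      ≤ ∑ k ∈ piAntidiag (univ : Finset ι) t, (Nat.multinomial univ k : ℝ) * ∏ i, w (k i) :=
        hmoment
    _ ≤ t ! * (∑ b ∈ range (t + 1), w b * x ^ b / b !) ^ Fintype.card ι / x ^ t := by
        rw [le_div_iff₀ (pow_pos hx t)]
        exact sum_multinomial_mul_prod_mul_pow_le hw hx.le t
    _ ≤ t ! * exp (2 * t / 3) / x ^ t := by gcongr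
    _ = t ! * exp (2 * t / 3) * (Fintype.card ι / t) ^ (t / 2) := by
        rw [hxt, div_eq_mul_inv, ← inv_pow, inv_div]

lemma measureReal_abs_sum_ge_le {ι : Type*} [Fintype ι] {Y : ι → Ω → ℝ}
    (hY : ∀ i, Measurable (Y i)) (hYb : ∀ i ω, |Y i ω| ≤ 1) (hY0 : ∀ i, ∫ ω, Y i ω ∂μ = 0)
    {t : ℕ} (ht : Even t) (ht0 : t ≠ 0) (hind : KWiseIndepFun t Y μ) {a : ℝ} (ha : 0 < a) :
    μ.real {ω | a ≤ |∑ i, Y i ω|} ≤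
      t ! * exp (2 * t / 3) / t ^ t * (Fintype.card ι * t / a ^ 2) ^ (t / 2) := by
  have hint : Integrable (fun ω => (∑ i, Y i ω) ^ t) μ :=
    .of_bound (by fun_prop) ((Fintype.card ι : ℝ) ^ t) <| ae_of_all _ fun ω => by
      rw [norm_pow, Real.norm_eq_abs]
      gcongr
      exact (abs_sum_le_sum_abs _ _).trans ((sum_le_sum fun i _ => hYb i ω).trans (by simp))
  have hsq (x : ℝ) : x ^ t = (x ^ 2) ^ (t / 2) := by
    rw [← pow_mul, Nat.two_mul_div_two_of_even ht]
  calc μ.real {ω | a ≤ |∑ i, Y i ω|}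
      ≤ (∫ ω, (∑ i, Y i ω) ^ t ∂μ) / a ^ t :=
        measureReal_abs_ge_le_integral_pow_div ht ht0 hint ha
    _ ≤ t ! * exp (2 * t / 3) * (Fintype.card ι / t) ^ (t / 2) / a ^ t := by
        gcongr
        exact integral_sum_pow_le hY hYb hY0 ht ht0 hind
    _ = t ! * exp (2 * t / 3) / t ^ t * (Fintype.card ι * t / a ^ 2) ^ (t / 2) := by
        rw [hsq a, hsq (t : ℝ)]
        simp only [div_pow, mul_pow]
        field_simp
        ring

end Moments

/-- **Limited-independence Chernoff–Hoeffding bound (Bellare–Rompel).**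
For every even integer `t ≥ 4` there is a constant `C_t` (with `C_t < 1` for `t ≥ 6`)
such that: if `X_1, …, X_n` are `t`-wise independent random variables with values in
`[0, 1]`, `X = X_1 + ⋯ + X_n` and `a > 0`, then
`Pr[|X − E[X]| ≥ a] ≤ C_t · (n·t/a²)^(t/2)`. -/
theorem stmt_12 (t : ℕ) (ht4 : 4 ≤ t) (hte : Even t) :
    ∃ Ct : ℝ, (6 ≤ t → Ct < 1) ∧
      ∀ (n : ℕ) (Ω : Type) (mΩ : MeasurableSpace Ω) (μ : Measure Ω),
        IsProbabilityMeasure μ →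
        ∀ X : Fin n → Ω → ℝ,
          (∀ i, Measurable (X i)) →
          (∀ i ω, X i ω ∈ Set.Icc (0 : ℝ) 1) →
          (∀ s : Finset (Fin n), s.card ≤ t →
            iIndepFun (fun i : s => X (i : Fin n)) μ) →
          ∀ a : ℝ, 0 < a →
            μ {ω | a ≤ |(∑ i, X i ω) - ∫ ω', (∑ i, X i ω') ∂μ|} ≤
              ENNReal.ofReal (Ct * (((n : ℝ) * t) / a ^ 2) ^ (t / 2)) := by
  refine ⟨t ! * exp (2 * t / 3) / t ^ t, fun ht6 => ?_, ?_⟩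
  · exact (div_lt_one (by positivity)).2 (factorial_mul_exp_lt_pow ht6)
  intro n Ω _ μ _ X hX hX01 hind a ha
  have hXint (i : Fin n) : Integrable (X i) μ :=
    .of_mem_Icc 0 1 (hX i).aemeasurable (ae_of_all _ (hX01 i))
  set Y : Fin n → Ω → ℝ := fun i ω => X i ω - ∫ ω', X i ω' ∂μ
  have hdev (ω : Ω) : (∑ i, X i ω) - ∫ ω', ∑ i, X i ω' ∂μ = ∑ i, Y i ω := by
    rw [integral_finsetSum _ fun i _ => hXint i, ← sum_sub_distrib]
  simp_rw [hdev]
  rw [← ofReal_measureReal]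
  refine ENNReal.ofReal_le_ofReal ?_
  simpa using measureReal_abs_sum_ge_le (Y := Y) (fun i => (hX i).sub_const _)
    (fun i => abs_sub_integral_le_one (hX01 i)) (fun i => by simp [Y, integral_sub (hXint i)])
    hte (by omega) (KWiseIndepFun.comp hind fun _ => measurable_id.sub_const _) ha
end
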